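/- arXiv:2309.09263 — 15 statements merged into one kernel-verified Lean document; each statement's English description precedes it below -/
import Mathlib

section
/- Let λ ∈ ℕ^r. Then every γ ∈ 2ℤ^r + ℤλ with λ ⪯ γ (product order) belongs to the additive submonoid of ℤ^r generated by 2θ₁, …, 2θ_r and λ. (Hence any normalized quasi-ordinary parameterization with n = 2 is formally equivalent to (t₁², …, t_r², t^{λ}).) -/
/-- The additive submonoid of ℤ^r generated by nθ₁, …, nθ_r and λ. -/
def GammaR (r n : ℕ) (lam : Fin r → ℤ) : AddSubmonoid (Fin r → ℤ) :=
  AddSubmonoid.closure (Set.range (fun i => Pi.single i (n : ℤ)) ∪ {lam})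

/-- γ ∈ nℤ^r + ℤλ. -/
def memQ1R (r n : ℕ) (lam γ : Fin r → ℤ) : Prop :=
  ∃ (a : ℤ) (c : Fin r → ℤ), γ = a • lam + (n : ℤ) • c

lemma single_double_mem (r : ℕ) (lam : Fin r → ℤ) (i : Fin r) (k : ℤ) (hk : 0 ≤ k) :
    Pi.single i (2 * k) ∈ GammaR r 2 lam := by
  have h : Pi.single i (2 * k) = (k.toNat • Pi.single i ((2 : ℕ) : ℤ) : Fin r → ℤ) := by
    funext j
    by_cases hj : j = i <;>
      simp [hj, Pi.single_apply, nsmul_eq_mul, Int.toNat_of_nonneg hk, mul_comm]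
  rw [h, GammaR]
  have hm : Pi.single i (((2 : ℕ) : ℤ)) ∈
      AddSubmonoid.closure ((Set.range (fun i => Pi.single i (((2:ℕ) : ℤ)))) ∪ {lam}) :=
    AddSubmonoid.subset_closure (Set.mem_union_left _ ⟨i, rfl⟩)
  exact nsmul_mem hm _

lemma even_nonneg_mem (r : ℕ) (lam v : Fin r → ℤ)
    (h : ∀ i, ∃ k : ℤ, 0 ≤ k ∧ v i = 2 * k) : v ∈ GammaR r 2 lam := by
  rw [← Finset.univ_sum_single v]
  refine AddSubmonoid.sum_mem _ (fun i _ => ?_)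
  obtain ⟨k, hk, hv⟩ := h i
  rw [hv]
  exact single_double_mem r lam i k hk

/-- For n = 2: every γ ∈ 2ℤ^r + ℤλ with λ ⪯ γ lies in the additive submonoid
generated by 2θ₁, …, 2θ_r and λ. -/
theorem stmt1 (r : ℕ) (hr : 1 ≤ r) (lam : Fin r → ℤ) (hlam : 0 ≤ lam)
    (γ : Fin r → ℤ) (hγ : memQ1R r 2 lam γ) (hle : lam ≤ γ) :
    γ ∈ GammaR r 2 lam := by
  obtain ⟨a, c, hac⟩ := hγ
  rcases Int.even_or_odd a with ⟨b, hb⟩ | ⟨b, hb⟩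
  · -- a = 2b : γ is even and nonnegative
    refine even_nonneg_mem r lam γ (fun i => ?_)
    refine ⟨b * lam i + c i, ?_, ?_⟩
    · have h1 : 0 ≤ lam i := hlam i
      have h2 : lam i ≤ γ i := hle i
      have h3 : γ i = 2 * (b * lam i + c i) := by
        rw [hac]; simp [hb]; ring
      omega
    · rw [hac]; simp [hb]; ring
  · -- a = 2b + 1 : γ = λ + even nonneg part
    have hlm : lam ∈ GammaR r 2 lam := by
      rw [GammaR]
      exact AddSubmonoid.subset_closure (Set.mem_union_right _ rfl)
    have hγeq : γ = lam + (γ - lam) := by ring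
    rw [hγeq]
    refine AddSubmonoid.add_mem _ hlm ?_
    refine even_nonneg_mem r lam _ (fun i => ?_)
    refine ⟨b * lam i + c i, ?_, ?_⟩
    · have h1 : 0 ≤ lam i := hlam i
      have h2 : lam i ≤ γ i := hle i
      have h3 : γ i - lam i = 2 * (b * lam i + c i) := by
        rw [hac]; simp [hb]; ring
      omega
    · simp only [Pi.sub_apply]
      rw [hac]; simp [hb]; ring
end

section
/- Let r ≥ 1, n ≥ 2, and λ₁, λ₂ ∈ ℕ^r with λ₁ ≠ 0 and λ₁ ≺ λ₂ (i.e. λ₁ ⪯ λ₂ componentwise and λ₁ ≠ λ₂). Let n₁ be the least positive integer k with kλ₁ ∈ nℤ^r and assume n₁ ≥ 2. Let Q₁ = nℤ^r + ℤλ₁, assume λ₂ ∉ Q₁, and let n₂ be the least positive integer k with kλ₂ ∈ Q₁. Set ν_{r+2} = n₁λ₁ + λ₂ − λ₁ ∈ ℕ^r, let Γ₁ be the additive submonoid of ℤ^r generated by nθ₁, …, nθ_r and λ₁, and let Γ be the additive submonoid generated by nθ₁, …, nθ_r, λ₁ and ν_{r+2}. Assume n₂·ν_{r+2} ∈ Γ₁.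 Then λ₂ ∉ Γ, and for every index i with (λ₁)_i ≥ n one has λ₂ ∉ Γ + 2λ₁ − nθ_i. -/
/-- The additive submonoid of ℤ^r generated by nθ₁, …, nθ_r and λ₁ (i.e. Γ₁). -/
def Gamma1R (r n : ℕ) (lam : Fin r → ℤ) : AddSubmonoid (Fin r → ℤ) :=
  AddSubmonoid.closure (Set.range (fun i => Pi.single i (n : ℤ)) ∪ {lam})

/-- The additive submonoid of ℤ^r generated by nθ₁, …, nθ_r, λ₁ and ν_{r+2}. -/
def Gamma2R (r n : ℕ) (lam ν : Fin r → ℤ) : AddSubmonoid (Fin r → ℤ) :=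
  AddSubmonoid.closure (Set.range (fun i => Pi.single i (n : ℤ)) ∪ {lam, ν})

lemma gamma2_rep {r n : ℕ} {lam ν g : Fin r → ℤ} (hg : g ∈ Gamma2R r n lam ν) :
    ∃ (a b : ℕ) (c : Fin r → ℤ), 0 ≤ c ∧
      g = (a : ℤ) • lam + (b : ℤ) • ν + (n : ℤ) • c := by
  induction hg using AddSubmonoid.closure_induction with
  | mem x hx =>
    rcases hx with ⟨i, rfl⟩ | hx
    · refine ⟨0, 0, Pi.single i 1, ?_, ?_⟩
      · intro j; by_cases h : j = i <;> simp [h, Pi.single_apply]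
      · funext j; simp [Pi.single_apply]
    · rcases hx with rfl | rfl
      · exact ⟨1, 0, 0, le_refl _, by simp⟩
      · exact ⟨0, 1, 0, le_refl _, by simp⟩
  | zero => exact ⟨0, 0, 0, le_refl _, by simp⟩
  | add x y hx hy ihx ihy =>
    obtain ⟨a, b, c, hc, rfl⟩ := ihx
    obtain ⟨a', b', c', hc', rfl⟩ := ihy
    refine ⟨a + a', b + b', c + c', add_nonneg hc hc', ?_⟩
    push_cast
    module

/-- Remark 3.5: the second characteristic exponent λ₂ lies outside
Γ ∪ ⋃_{i : (λ₁)ᵢ ≥ n} (Γ + 2λ₁ − nθᵢ). -/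
theorem stmt3 (r n n₁ n₂ : ℕ) (hr : 1 ≤ r) (hn : 2 ≤ n)
    (lam₁ lam₂ : Fin r → ℤ) (h1 : 0 ≤ lam₁) (h2 : 0 ≤ lam₂)
    (hne0 : lam₁ ≠ 0) (hle : lam₁ ≤ lam₂) (hne : lam₁ ≠ lam₂)
    (hn₁ : IsLeast {k : ℕ | 0 < k ∧ ∃ c : Fin r → ℤ, (k : ℤ) • lam₁ = (n : ℤ) • c} n₁)
    (hn₁2 : 2 ≤ n₁)
    (hQ : ¬ memQ1R r n lam₁ lam₂)
    (hn₂ : IsLeast {k : ℕ | 0 < k ∧ memQ1R r n lam₁ ((k : ℤ) • lam₂)} n₂)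
    (ν : Fin r → ℤ) (hν : ν = (n₁ : ℤ) • lam₁ + lam₂ - lam₁)
    (hfree : (n₂ : ℤ) • ν ∈ Gamma1R r n lam₁) :
    lam₂ ∉ Gamma2R r n lam₁ ν ∧
    ∀ i : Fin r, (n : ℤ) ≤ lam₁ i →
      ¬ ∃ g ∈ Gamma2R r n lam₁ ν, lam₂ = g + (2 : ℤ) • lam₁ - Pi.single i (n : ℤ) := by
  -- index where lam₁ is positive
  obtain ⟨j, hj⟩ : ∃ j, 0 < lam₁ j := by
    by_contra h
    push_neg at h
    exact hne0 (funext fun j => le_antisymm (h j) (h1 j))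
  have hN1 : (2 : ℤ) ≤ (n₁ : ℤ) := by exact_mod_cast hn₁2
  constructor
  · intro hmem
    obtain ⟨a, b, c, hc, hg⟩ := gamma2_rep hmem
    rcases Nat.eq_zero_or_pos b with rfl | hb
    · exact hQ ⟨(a : ℤ), c, by simpa using hg⟩
    · have hB : (1 : ℤ) ≤ (b : ℤ) := by exact_mod_cast hb
      have heq := congrFun hg j
      rw [hν] at heq
      simp only [Pi.add_apply, Pi.sub_apply, Pi.smul_apply, smul_eq_mul] at heq
      have hA : (0 : ℤ) ≤ (a : ℤ) := Int.natCast_nonneg a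
      have hcj : (0 : ℤ) ≤ c j := hc j
      have hL2 : lam₁ j ≤ lam₂ j := hle j
      have hnpos : (0 : ℤ) < n := by positivity
      nlinarith [mul_nonneg hA hj.le, mul_nonneg hnpos.le hcj,
        mul_nonneg (sub_nonneg.2 hB) (lt_of_lt_of_le hj hL2).le,
        mul_nonneg (mul_nonneg (sub_nonneg.2 hB) (sub_nonneg.2 (by linarith : (1:ℤ) ≤ n₁ - 1))) hj.le]
  · intro i hi ⟨g, hgmem, hg⟩
    obtain ⟨a, b, c, hc, rfl⟩ := gamma2_rep hgmem
    rcases Nat.eq_zero_or_pos b with rfl | hb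
    · refine hQ ⟨(a : ℤ) + 2, c - Pi.single i 1, ?_⟩
      rw [hg]
      funext k
      by_cases h : k = i <;>
        simp [h, Pi.single_apply] <;> ring
    · have hB : (1 : ℤ) ≤ (b : ℤ) := by exact_mod_cast hb
      have heq := congrFun hg i
      rw [hν] at heq
      simp only [Pi.add_apply, Pi.sub_apply, Pi.smul_apply, smul_eq_mul,
        Pi.single_apply, if_pos rfl, if_true] at heq
      have hA : (0 : ℤ) ≤ (a : ℤ) := Int.natCast_nonneg a
      have hci : (0 : ℤ) ≤ c i := hc i
      have hL2 : lam₁ i ≤ lam₂ i := hle i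
      have hnpos : (0 : ℤ) < n := by linarith
      have hL1 : (0 : ℤ) < lam₁ i := lt_of_lt_of_le hnpos hi
      nlinarith [mul_nonneg hA hL1.le, mul_nonneg hnpos.le hci,
        mul_nonneg (sub_nonneg.2 hB) (lt_of_lt_of_le hL1 hL2).le,
        mul_nonneg (mul_nonneg (sub_nonneg.2 hB) (sub_nonneg.2 (by linarith : (1:ℤ) ≤ n₁ - 1))) hL1.le]
end

section
/- Let n ≥ 3 and λ = (λ₁, λ₂) ∈ ℕ² with λ₂ ≤ λ₁ and λ of order n modulo nℤ². If (n−2)λ₁ ≥ 4n, then the three elements (n−1)λ + n(−4,2), (n−1)λ + n(−3,1), (n−1)λ + n(−2,0); if (n−2)λ₂ ≥ 2n, then the three elements (n−1)λ + n(−2,0), (n−1)λ + n(0,−2), (n−1)λ + n(−1,−1); and if (n−2)λ₂ ≥ n and (n−2)λ₁ ≥ 3n, then the three elements (n−1)λ + n(−3,1), (n−1)λ + n(−2,0), (n−1)λ + n(−1,−1) — in each case all three elements lie in ℕ², are pairwise incomparable for the product order, satisfy γ ≻ λ, and none of them belongs to Γ ∪ ⋃_{i ∈ {1,2}, λ_i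 ≥ n} (Γ + 2λ − ν_i). -/
set_option maxHeartbeats 1000000


/-- The additive submonoid of ℤ² generated by ν₁ = (n,0), ν₂ = (0,n) and λ. -/
def GammaQO (n : ℕ) (lam : ℤ × ℤ) : AddSubmonoid (ℤ × ℤ) :=
  AddSubmonoid.closure {((n : ℤ), 0), (0, (n : ℤ)), lam}

/-- γ ∈ Q₁ = nℤ² + ℤλ. -/
def memQ1 (n : ℕ) (lam γ : ℤ × ℤ) : Prop :=
  ∃ a c₁ c₂ : ℤ, γ = a • lam + ((n : ℤ) * c₁, (n : ℤ) * c₂)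

/-- λ has order n modulo nℤ²: n is the least positive k with kλ ∈ nℤ². -/
def orderModN (n : ℕ) (lam : ℤ × ℤ) : Prop :=
  IsLeast {k : ℕ | 0 < k ∧ ∃ c₁ c₂ : ℤ, (k : ℤ) • lam = ((n : ℤ) * c₁, (n : ℤ) * c₂)} n

/-- γ belongs to Γ ∪ ⋃_{i ∈ {1,2}, λᵢ ≥ n} (Γ + 2λ − νᵢ). -/
def memBad (n : ℕ) (lam γ : ℤ × ℤ) : Prop :=
  γ ∈ GammaQO n lam ∨
  ((n : ℤ) ≤ lam.1 ∧ ∃ g ∈ GammaQO n lam, γ = g + (2 : ℤ) • lam - ((n : ℤ), 0)) ∨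
  ((n : ℤ) ≤ lam.2 ∧ ∃ g ∈ GammaQO n lam, γ = g + (2 : ℤ) • lam - (0, (n : ℤ)))

/-- The three elements lie in ℕ², are pairwise incomparable for the product
order, each is ≻ λ, and none belongs to Γ ∪ ⋃_{λᵢ ≥ n}(Γ + 2λ − νᵢ). -/
def ZTriple (n : ℕ) (lam x y z : ℤ × ℤ) : Prop :=
  (0 ≤ x ∧ 0 ≤ y ∧ 0 ≤ z) ∧
  (¬ x ≤ y ∧ ¬ y ≤ x ∧ ¬ x ≤ z ∧ ¬ z ≤ x ∧ ¬ y ≤ z ∧ ¬ z ≤ y) ∧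
  ((lam ≤ x ∧ x ≠ lam) ∧ (lam ≤ y ∧ y ≠ lam) ∧ (lam ≤ z ∧ z ≠ lam)) ∧
  (¬ memBad n lam x ∧ ¬ memBad n lam y ∧ ¬ memBad n lam z)

lemma mem_gamma_iff (n : ℕ) (lam : ℤ × ℤ) (g : ℤ × ℤ) :
    g ∈ GammaQO n lam ↔ ∃ a b₁ b₂ : ℕ, g = (a : ℤ) • lam + ((n:ℤ) * b₁, (n:ℤ) * b₂) := by
  constructor
  · intro hg
    induction hg using AddSubmonoid.closure_induction with
    | mem x hx =>
      simp only [Set.mem_insert_iff, Set.mem_singleton_iff] at hx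
      rcases hx with h | h | h
      · exact ⟨0, 1, 0, by simp [h]⟩
      · exact ⟨0, 0, 1, by simp [h]⟩
      · exact ⟨1, 0, 0, by simp [h]⟩
    | zero => exact ⟨0, 0, 0, by simp [Prod.zero_eq_mk]⟩
    | add x y hx hy ihx ihy =>
      obtain ⟨a, b₁, b₂, rfl⟩ := ihx
      obtain ⟨a', b₁', b₂', rfl⟩ := ihy
      exact ⟨a + a', b₁ + b₁', b₂ + b₂', by push_cast; apply Prod.ext <;> simp [smul_eq_mul] <;> ring⟩
  · rintro ⟨a, b₁, b₂, rfl⟩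
    apply add_mem
    · rw [natCast_zsmul]
      exact nsmul_mem (AddSubmonoid.subset_closure (by simp)) a
    · have : ((n:ℤ) * b₁, (n:ℤ) * b₂) = b₁ • (((n:ℤ), 0) : ℤ × ℤ) + b₂ • ((0, (n:ℤ)) : ℤ × ℤ) := by
        apply Prod.ext <;> simp [mul_comm]
      rw [this]
      exact add_mem (nsmul_mem (AddSubmonoid.subset_closure (by simp)) b₁)
        (nsmul_mem (AddSubmonoid.subset_closure (by simp)) b₂)

lemma order_dvd (n : ℕ) (hn : 0 < n) (lam : ℤ × ℤ) (hord : orderModN n lam)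
    (k : ℤ) (h1 : (n:ℤ) ∣ k * lam.1) (h2 : (n:ℤ) ∣ k * lam.2) : (n:ℤ) ∣ k := by
  have hnz : (0:ℤ) < n := by exact_mod_cast hn
  set r := k % (n:ℤ) with hr
  have hr0 : 0 ≤ r := Int.emod_nonneg k (by positivity)
  have hrn : r < n := Int.emod_lt_of_pos k hnz
  have hrk : r = k - (n:ℤ) * (k / n) := Int.emod_def k n
  have hd1 : (n:ℤ) ∣ r * lam.1 := by
    have : r * lam.1 = k * lam.1 - (n:ℤ) * ((k / n) * lam.1) := by rw [hrk]; ring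
    rw [this]; exact dvd_sub h1 ⟨(k / n) * lam.1, rfl⟩
  have hd2 : (n:ℤ) ∣ r * lam.2 := by
    have : r * lam.2 = k * lam.2 - (n:ℤ) * ((k / n) * lam.2) := by rw [hrk]; ring
    rw [this]; exact dvd_sub h2 ⟨(k / n) * lam.2, rfl⟩
  rcases eq_or_lt_of_le hr0 with he | hlt
  · exact Int.dvd_of_emod_eq_zero he.symm
  · exfalso
    obtain ⟨c₁, hc₁⟩ := hd1
    obtain ⟨c₂, hc₂⟩ := hd2
    have hmem : r.toNat ∈ {k : ℕ | 0 < k ∧ ∃ c₁ c₂ : ℤ, (k : ℤ) • lam = ((n : ℤ) * c₁, (n : ℤ) * c₂)} := by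
      refine ⟨by omega, c₁, c₂, ?_⟩
      have : ((r.toNat : ℤ)) = r := Int.toNat_of_nonneg hr0
      rw [this]
      apply Prod.ext <;> simp [smul_eq_mul, hc₁, hc₂]
    have := hord.2 hmem
    omega

lemma not_mem_gamma (n : ℕ) (hn : 0 < n) (l1 l2 : ℤ) (h01 : 0 ≤ l1) (h02 : 0 ≤ l2)
    (hord : orderModN n (l1, l2)) (m : ℤ) (hm : m < n) (v1 v2 : ℤ)
    (hv : v1 < 0 ∨ v2 < 0) :
    (m * l1 + (n:ℤ) * v1, m * l2 + (n:ℤ) * v2) ∉ GammaQO n (l1, l2) := by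
  intro hg
  rw [mem_gamma_iff] at hg
  obtain ⟨a, b₁, b₂, hrep⟩ := hg
  rw [Prod.ext_iff] at hrep
  simp only [Prod.fst_add, Prod.snd_add, smul_eq_mul, Prod.smul_fst, Prod.smul_snd] at hrep
  obtain ⟨e1, e2⟩ := hrep
  have hnz : (0:ℤ) < n := by exact_mod_cast hn
  have hdvd : (n:ℤ) ∣ (m - a) := by
    apply order_dvd n hn (l1, l2) hord
    · exact ⟨b₁ - v1, by simp; linarith⟩
    · exact ⟨b₂ - v2, by simp; linarith⟩
  have hma : m - a ≤ 0 := by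
    by_contra h
    push_neg at h
    have := Int.le_of_dvd h hdvd
    have ha : (0:ℤ) ≤ a := Int.natCast_nonneg a
    linarith
  have hb₁ : (0:ℤ) ≤ b₁ := Int.natCast_nonneg b₁
  have hb₂ : (0:ℤ) ≤ b₂ := Int.natCast_nonneg b₂
  rcases hv with hv | hv
  · nlinarith [mul_nonneg (by linarith : (0:ℤ) ≤ (a:ℤ) - m) h01,
      mul_nonneg hnz.le hb₁, mul_pos hnz (by linarith : (0:ℤ) < -v1)]
  · nlinarith [mul_nonneg (by linarith : (0:ℤ) ≤ (a:ℤ) - m) h02,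
      mul_nonneg hnz.le hb₂, mul_pos hnz (by linarith : (0:ℤ) < -v2)]

lemma not_memBad (n : ℕ) (hn : 3 ≤ n) (l1 l2 : ℤ) (h01 : 0 ≤ l1) (h02 : 0 ≤ l2)
    (hord : orderModN n (l1, l2)) (v1 v2 : ℤ)
    (hv : v1 < 0 ∨ v2 < 0) (hv1 : v1 + 1 < 0 ∨ v2 < 0) (hv2 : v1 < 0 ∨ v2 + 1 < 0) :
    ¬ memBad n (l1, l2) (((n:ℤ)-1) * l1 + (n:ℤ) * v1, ((n:ℤ)-1) * l2 + (n:ℤ) * v2) := by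
  have hn0 : 0 < n := by omega
  have hnz : (3:ℤ) ≤ n := by exact_mod_cast hn
  rintro (h | ⟨-, g, hg, hγ⟩ | ⟨-, g, hg, hγ⟩)
  · exact not_mem_gamma n hn0 l1 l2 h01 h02 hord ((n:ℤ)-1) (by linarith) v1 v2 hv h
  · have hgeq : g = (((n:ℤ)-3) * l1 + (n:ℤ) * (v1+1), ((n:ℤ)-3) * l2 + (n:ℤ) * v2) := by
      rw [Prod.ext_iff] at hγ ⊢
      simp only [Prod.fst_sub, Prod.snd_sub, Prod.fst_add, Prod.snd_add, smul_eq_mul,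
        Prod.smul_fst, Prod.smul_snd] at hγ ⊢
      constructor <;> linarith [hγ.1, hγ.2]
    rw [hgeq] at hg
    exact not_mem_gamma n hn0 l1 l2 h01 h02 hord ((n:ℤ)-3) (by linarith) (v1+1) v2 hv1 hg
  · have hgeq : g = (((n:ℤ)-3) * l1 + (n:ℤ) * v1, ((n:ℤ)-3) * l2 + (n:ℤ) * (v2+1)) := by
      rw [Prod.ext_iff] at hγ ⊢
      simp only [Prod.fst_sub, Prod.snd_sub, Prod.fst_add, Prod.snd_add, smul_eq_mul,
        Prod.smul_fst, Prod.smul_snd] at hγ ⊢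
      constructor <;> linarith [hγ.1, hγ.2]
    rw [hgeq] at hg
    exact not_mem_gamma n hn0 l1 l2 h01 h02 hord ((n:ℤ)-3) (by linarith) v1 (v2+1) hv2 hg


/-- Lemma 4.4: in each of the three numerical ranges, three candidate
generalized Zariski exponents occur. -/
theorem stmt4 (n : ℕ) (hn : 3 ≤ n) (lam : ℤ × ℤ) (h0 : 0 ≤ lam)
    (h21 : lam.2 ≤ lam.1) (hord : orderModN n lam) :
    ((4 * (n : ℤ) ≤ ((n : ℤ) - 2) * lam.1 →
      ZTriple n lam
        (((n : ℤ) - 1) • lam + (n : ℤ) • ((-4, 2) : ℤ × ℤ))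
        (((n : ℤ) - 1) • lam + (n : ℤ) • ((-3, 1) : ℤ × ℤ))
        (((n : ℤ) - 1) • lam + (n : ℤ) • ((-2, 0) : ℤ × ℤ))) ∧
     (2 * (n : ℤ) ≤ ((n : ℤ) - 2) * lam.2 →
      ZTriple n lam
        (((n : ℤ) - 1) • lam + (n : ℤ) • ((-2, 0) : ℤ × ℤ))
        (((n : ℤ) - 1) • lam + (n : ℤ) • ((0, -2) : ℤ × ℤ))
        (((n : ℤ) - 1) • lam + (n : ℤ) • ((-1, -1) : ℤ × ℤ))) ∧
     ((n : ℤ) ≤ ((n : ℤ) - 2) * lam.2 → 3 * (n : ℤ) ≤ ((n : ℤ) - 2) * lam.1 →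
      ZTriple n lam
        (((n : ℤ) - 1) • lam + (n : ℤ) • ((-3, 1) : ℤ × ℤ))
        (((n : ℤ) - 1) • lam + (n : ℤ) • ((-2, 0) : ℤ × ℤ))
        (((n : ℤ) - 1) • lam + (n : ℤ) • ((-1, -1) : ℤ × ℤ)))) := by
  obtain ⟨l1, l2⟩ := lam
  have h01 : (0:ℤ) ≤ l1 := h0.1
  have h02 : (0:ℤ) ≤ l2 := h0.2
  have h21' : l2 ≤ l1 := h21
  have hnz : (3:ℤ) ≤ (n:ℤ) := by exact_mod_cast hn
  have k2 : (0:ℤ) ≤ ((n:ℤ)-2)*l2 := mul_nonneg (by linarith) h02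
  have k1 : (0:ℤ) ≤ ((n:ℤ)-2)*l1 := mul_nonneg (by linarith) h01
  have key : ((n:ℤ)-2)*l2 ≤ ((n:ℤ)-2)*l1 := mul_le_mul_of_nonneg_left h21' (by linarith)
  have E : ∀ v1 v2 : ℤ, ((n:ℤ)-1) • ((l1, l2) : ℤ × ℤ) + (n:ℤ) • ((v1, v2) : ℤ × ℤ)
      = (((n:ℤ)-1)*l1 + (n:ℤ)*v1, ((n:ℤ)-1)*l2 + (n:ℤ)*v2) := by
    intro v1 v2; apply Prod.ext <;> simp [smul_eq_mul]
  refine ⟨fun h => ?_, fun h => ?_, fun ha hb => ?_⟩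
  · have h' : 4*(n:ℤ) ≤ ((n:ℤ)-2)*l1 := h
    simp only [ZTriple, E]
    refine ⟨⟨?_, ?_, ?_⟩, ⟨?_, ?_, ?_, ?_, ?_, ?_⟩, ⟨⟨?_, ?_⟩, ⟨?_, ?_⟩, ⟨?_, ?_⟩⟩,
      not_memBad n hn l1 l2 h01 h02 hord (-4) 2 (by norm_num) (by norm_num) (by norm_num),
      not_memBad n hn l1 l2 h01 h02 hord (-3) 1 (by norm_num) (by norm_num) (by norm_num),
      not_memBad n hn l1 l2 h01 h02 hord (-2) 0 (by norm_num) (by norm_num) (by norm_num)⟩ <;>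
      simp only [Prod.le_def, Prod.mk.injEq, ne_eq, Prod.fst_zero, Prod.snd_zero] <;>
      first
        | (rintro ⟨h1, h2⟩; linarith)
        | (constructor <;> linarith)
  · have h' : 2*(n:ℤ) ≤ ((n:ℤ)-2)*l2 := h
    simp only [ZTriple, E]
    refine ⟨⟨?_, ?_, ?_⟩, ⟨?_, ?_, ?_, ?_, ?_, ?_⟩, ⟨⟨?_, ?_⟩, ⟨?_, ?_⟩, ⟨?_, ?_⟩⟩,
      not_memBad n hn l1 l2 h01 h02 hord (-2) 0 (by norm_num) (by norm_num) (by norm_num),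
      not_memBad n hn l1 l2 h01 h02 hord 0 (-2) (by norm_num) (by norm_num) (by norm_num),
      not_memBad n hn l1 l2 h01 h02 hord (-1) (-1) (by norm_num) (by norm_num) (by norm_num)⟩ <;>
      simp only [Prod.le_def, Prod.mk.injEq, ne_eq, Prod.fst_zero, Prod.snd_zero] <;>
      first
        | (rintro ⟨h1, h2⟩; linarith)
        | (constructor <;> linarith)
  · have ha' : (n:ℤ) ≤ ((n:ℤ)-2)*l2 := ha
    have hb' : 3*(n:ℤ) ≤ ((n:ℤ)-2)*l1 := hb
    simp only [ZTriple, E]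
    refine ⟨⟨?_, ?_, ?_⟩, ⟨?_, ?_, ?_, ?_, ?_, ?_⟩, ⟨⟨?_, ?_⟩, ⟨?_, ?_⟩, ⟨?_, ?_⟩⟩,
      not_memBad n hn l1 l2 h01 h02 hord (-3) 1 (by norm_num) (by norm_num) (by norm_num),
      not_memBad n hn l1 l2 h01 h02 hord (-2) 0 (by norm_num) (by norm_num) (by norm_num),
      not_memBad n hn l1 l2 h01 h02 hord (-1) (-1) (by norm_num) (by norm_num) (by norm_num)⟩ <;>
      simp only [Prod.le_def, Prod.mk.injEq, ne_eq, Prod.fst_zero, Prod.snd_zero] <;>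
      first
        | (rintro ⟨h1, h2⟩; linarith)
        | (constructor <;> linarith)
end

section
/- Let n ∈ {3,4} and λ = (λ₁, λ₂) ∈ ℕ² with (n−2)λ₂ < n, 3n ≤ (n−2)λ₁ < 4n, and λ of order n modulo nℤ². Then every γ ∈ Q₁ with γ ≻ λ and γ ∉ Γ ∪ (Γ + 2λ − (n,0)) has the form γ = (n−1)λ + n(−2,k) or γ = (n−1)λ + n(−3,k) for some k ∈ ℕ. -/
lemma mem_GammaQO_of (n : ℕ) (lam : ℤ × ℤ) (α β₁ β₂ : ℕ) (g : ℤ × ℤ)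
    (h1 : g.1 = (α : ℤ) * lam.1 + (n : ℤ) * (β₁ : ℤ))
    (h2 : g.2 = (α : ℤ) * lam.2 + (n : ℤ) * (β₂ : ℤ)) :
    g ∈ GammaQO n lam := by
  have m1 : (((n : ℤ), (0:ℤ)) : ℤ × ℤ) ∈ GammaQO n lam :=
    AddSubmonoid.subset_closure (Set.mem_insert _ _)
  have m2 : (((0:ℤ), (n : ℤ)) : ℤ × ℤ) ∈ GammaQO n lam :=
    AddSubmonoid.subset_closure (Set.mem_insert_of_mem _ (Set.mem_insert _ _))
  have m3 : lam ∈ GammaQO n lam :=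
    AddSubmonoid.subset_closure
      (Set.mem_insert_of_mem _ (Set.mem_insert_of_mem _ rfl))
  have e : g = α • lam + (β₁ • (((n : ℤ), (0:ℤ)) : ℤ × ℤ) + β₂ • (((0:ℤ), (n : ℤ)) : ℤ × ℤ)) := by
    refine Prod.ext ?_ ?_ <;>
      simp [Prod.smul_fst, Prod.smul_snd, smul_eq_mul, h1, h2] <;> ring
  rw [e]
  exact AddSubmonoid.add_mem _ (AddSubmonoid.nsmul_mem _ m3 α)
    (AddSubmonoid.add_mem _ (AddSubmonoid.nsmul_mem _ m1 β₁) (AddSubmonoid.nsmul_mem _ m2 β₂))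

/-- Proposition 4.5 (combinatorial core): possible exponents of a quasi-short
parameterization in the range (n−2)λ₂ < n, 3n ≤ (n−2)λ₁ < 4n, n ∈ {3,4}. -/
theorem stmt5 (n : ℕ) (hn : n = 3 ∨ n = 4) (lam : ℤ × ℤ) (h0 : 0 ≤ lam)
    (h1 : ((n : ℤ) - 2) * lam.2 < (n : ℤ))
    (h2 : 3 * (n : ℤ) ≤ ((n : ℤ) - 2) * lam.1)
    (h3 : ((n : ℤ) - 2) * lam.1 < 4 * (n : ℤ))
    (hord : orderModN n lam)
    (γ : ℤ × ℤ) (hγQ : memQ1 n lam γ) (hle : lam ≤ γ) (hne : γ ≠ lam)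
    (hΓ : γ ∉ GammaQO n lam)
    (hΓ2 : ¬ ∃ g ∈ GammaQO n lam, γ = g + (2 : ℤ) • lam - ((n : ℤ), 0)) :
    ∃ k : ℕ, γ = ((n : ℤ) - 1) • lam + (n : ℤ) • (((-2 : ℤ), (k : ℤ)) : ℤ × ℤ) ∨
             γ = ((n : ℤ) - 1) • lam + (n : ℤ) • (((-3 : ℤ), (k : ℤ)) : ℤ × ℤ) := by
  obtain ⟨a, c₁, c₂, hγ⟩ := hγQ
  have h01 : 0 ≤ lam.1 := h0.1
  have h02 : 0 ≤ lam.2 := h0.2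
  have hle1 : lam.1 ≤ γ.1 := hle.1
  have hle2 : lam.2 ≤ γ.2 := hle.2
  have hg1 : γ.1 = a * lam.1 + (n : ℤ) * c₁ := by
    rw [hγ]; simp [Prod.smul_fst, smul_eq_mul]
  have hg2 : γ.2 = a * lam.2 + (n : ℤ) * c₂ := by
    rw [hγ]; simp [Prod.smul_snd, smul_eq_mul]
  have hnpos : (0:ℤ) < (n : ℤ) := by rcases hn with h | h <;> simp [h]
  have hdiv : (n : ℤ) * (a / (n : ℤ)) + a % (n : ℤ) = a := Int.mul_ediv_add_emod a n
  have hr0 : 0 ≤ a % (n : ℤ) := Int.emod_nonneg a hnpos.ne'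
  have hrn : a % (n : ℤ) < (n : ℤ) := Int.emod_lt_of_pos a hnpos
  set r := a % (n : ℤ) with hrdef
  set q := a / (n : ℤ) with hqdef
  set d₁ := c₁ + q * lam.1 with hd1
  set d₂ := c₂ + q * lam.2 with hd2
  have hg1' : γ.1 = r * lam.1 + (n : ℤ) * d₁ := by
    rw [hd1]; linear_combination hg1 - lam.1 * hdiv
  have hg2' : γ.2 = r * lam.2 + (n : ℤ) * d₂ := by
    rw [hd2]; linear_combination hg2 - lam.2 * hdiv
  clear hg1 hg2 hdiv hγ hne hord
  rcases hn with hn | hn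
  · subst hn
    push_cast at h1 h2 h3 hg1' hg2' hr0 hrn
    norm_num at h1 h2 h3
    have hr : r = 0 ∨ r = 1 ∨ r = 2 := by omega
    rcases hr with hr | hr | hr
    · rw [hr] at hg1' hg2'
      exact absurd (mem_GammaQO_of 3 lam 0 d₁.toNat d₂.toNat γ
        (by push_cast; omega) (by push_cast; omega)) hΓ
    · rw [hr] at hg1' hg2'
      exact absurd (mem_GammaQO_of 3 lam 1 d₁.toNat d₂.toNat γ
        (by push_cast; omega) (by push_cast; omega)) hΓ
    · rw [hr] at hg1' hg2'
      have hd1b : -3 ≤ d₁ := by omega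
      have hd2b : 0 ≤ d₂ := by omega
      rcases (show 0 ≤ d₁ ∨ d₁ = -1 ∨ d₁ = -2 ∨ d₁ = -3 by omega) with h | h | h | h
      · exact absurd (mem_GammaQO_of 3 lam 2 d₁.toNat d₂.toNat γ
          (by push_cast; omega) (by push_cast; omega)) hΓ
      · exfalso; apply hΓ2
        refine ⟨((0:ℤ), 3 * (d₂.toNat : ℤ)),
          mem_GammaQO_of 3 lam 0 0 d₂.toNat _ (by push_cast; ring) (by push_cast; ring), ?_⟩
        refine Prod.ext ?_ ?_ <;>
          simp [Prod.smul_fst, Prod.smul_snd, smul_eq_mul] <;> push_cast <;> omega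
      · refine ⟨d₂.toNat, Or.inl ?_⟩
        refine Prod.ext ?_ ?_ <;>
          simp [Prod.smul_fst, Prod.smul_snd, smul_eq_mul] <;> push_cast <;> omega
      · refine ⟨d₂.toNat, Or.inr ?_⟩
        refine Prod.ext ?_ ?_ <;>
          simp [Prod.smul_fst, Prod.smul_snd, smul_eq_mul] <;> push_cast <;> omega
  · subst hn
    push_cast at h1 h2 h3 hg1' hg2' hr0 hrn
    norm_num at h1 h2 h3
    have hr : r = 0 ∨ r = 1 ∨ r = 2 ∨ r = 3 := by omega
    rcases hr with hr | hr | hr | hr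
    · rw [hr] at hg1' hg2'
      exact absurd (mem_GammaQO_of 4 lam 0 d₁.toNat d₂.toNat γ
        (by push_cast; omega) (by push_cast; omega)) hΓ
    · rw [hr] at hg1' hg2'
      exact absurd (mem_GammaQO_of 4 lam 1 d₁.toNat d₂.toNat γ
        (by push_cast; omega) (by push_cast; omega)) hΓ
    · rw [hr] at hg1' hg2'
      have hd2b : 0 ≤ d₂ := by omega
      rcases (show 0 ≤ d₁ ∨ d₁ = -1 by omega) with h | h
      · exact absurd (mem_GammaQO_of 4 lam 2 d₁.toNat d₂.toNat γ
          (by push_cast; omega) (by push_cast; omega)) hΓ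
      · exfalso; apply hΓ2
        refine ⟨((0:ℤ), 4 * (d₂.toNat : ℤ)),
          mem_GammaQO_of 4 lam 0 0 d₂.toNat _ (by push_cast; ring) (by push_cast; ring), ?_⟩
        refine Prod.ext ?_ ?_ <;>
          simp [Prod.smul_fst, Prod.smul_snd, smul_eq_mul] <;> push_cast <;> omega
    · rw [hr] at hg1' hg2'
      have hd1b : -3 ≤ d₁ := by omega
      have hd2b : 0 ≤ d₂ := by omega
      rcases (show 0 ≤ d₁ ∨ d₁ = -1 ∨ d₁ = -2 ∨ d₁ = -3 by omega) with h | h | h | h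
      · exact absurd (mem_GammaQO_of 4 lam 3 d₁.toNat d₂.toNat γ
          (by push_cast; omega) (by push_cast; omega)) hΓ
      · exfalso; apply hΓ2
        refine ⟨(lam.1, lam.2 + 4 * (d₂.toNat : ℤ)),
          mem_GammaQO_of 4 lam 1 0 d₂.toNat _ (by push_cast; ring) (by push_cast; ring), ?_⟩
        refine Prod.ext ?_ ?_ <;>
          simp [Prod.smul_fst, Prod.smul_snd, smul_eq_mul] <;> push_cast <;> omega
      · refine ⟨d₂.toNat, Or.inl ?_⟩
        refine Prod.ext ?_ ?_ <;>
          simp [Prod.smul_fst, Prod.smul_snd, smul_eq_mul] <;> push_cast <;> omega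
      · refine ⟨d₂.toNat, Or.inr ?_⟩
        refine Prod.ext ?_ ?_ <;>
          simp [Prod.smul_fst, Prod.smul_snd, smul_eq_mul] <;> push_cast <;> omega
end

section
/- Let n ≥ 8 and λ = (2, λ₂) with λ₂ ∈ {1,2}, and assume λ has order n modulo nℤ². Then the three elements (n−1)λ + n(−1,0), (n−2)λ + n(−1,1), (n−3)λ + n(−1,2) lie in ℕ², are pairwise incomparable for the product order, each satisfies γ ≻ λ, and none of them belongs to Γ. -/
/-- The three elements lie in ℕ², are pairwise incomparable for the product
order, each is ≻ λ, and none belongs to Γ. -/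
def GTriple (n : ℕ) (lam x y z : ℤ × ℤ) : Prop :=
  (0 ≤ x ∧ 0 ≤ y ∧ 0 ≤ z) ∧
  (¬ x ≤ y ∧ ¬ y ≤ x ∧ ¬ x ≤ z ∧ ¬ z ≤ x ∧ ¬ y ≤ z ∧ ¬ z ≤ y) ∧
  ((lam ≤ x ∧ x ≠ lam) ∧ (lam ≤ y ∧ y ≠ lam) ∧ (lam ≤ z ∧ z ≠ lam)) ∧
  (x ∉ GammaQO n lam ∧ y ∉ GammaQO n lam ∧ z ∉ GammaQO n lam)

lemma mem_gamma_elim {n : ℕ} {lam γ : ℤ × ℤ} (h : γ ∈ GammaQO n lam) :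
    ∃ a b c : ℕ, γ = a • lam + (((n : ℤ) * b, (n : ℤ) * c) : ℤ × ℤ) := by
  induction h using AddSubmonoid.closure_induction with
  | mem p hp =>
    rcases hp with h | h | h
    · exact ⟨0, 1, 0, by simp [h]⟩
    · exact ⟨0, 0, 1, by simp [h]⟩
    · simp only [Set.mem_singleton_iff] at h
      exact ⟨1, 0, 0, by simp [h]⟩
  | zero => exact ⟨0, 0, 0, by simp [Prod.zero_eq_mk]⟩
  | add p q hp hq ihp ihq =>
    obtain ⟨a, b, c, rfl⟩ := ihp
    obtain ⟨a', b', c', rfl⟩ := ihq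
    refine ⟨a + a', b + b', c + c', ?_⟩
    simp only [add_smul, Prod.ext_iff, Prod.fst_add, Prod.snd_add]
    push_cast
    constructor <;> ring

lemma dvd_of_smul_mem {n : ℕ} {lam : ℤ × ℤ} (hord : orderModN n lam) (k : ℤ)
    (h : ∃ c₁ c₂ : ℤ, k • lam = ((n : ℤ) * c₁, (n : ℤ) * c₂)) : (n : ℤ) ∣ k := by
  obtain ⟨⟨hn0, e₁, e₂, he⟩, hleast⟩ := hord
  obtain ⟨c₁, c₂, hc⟩ := h
  by_contra hnd
  set r : ℤ := k % (n : ℤ) with hrdef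
  have hnpos : (0 : ℤ) < (n : ℤ) := by exact_mod_cast hn0
  have hr0 : 0 ≤ r := Int.emod_nonneg k (by positivity)
  have hrn : r < (n : ℤ) := Int.emod_lt_of_pos k hnpos
  have hrne : r ≠ 0 := by
    intro h0
    exact hnd (Int.dvd_of_emod_eq_zero h0)
  have hc1 : k * lam.1 = (n : ℤ) * c₁ := by
    have := congrArg Prod.fst hc; simpa [smul_eq_mul] using this
  have hc2 : k * lam.2 = (n : ℤ) * c₂ := by
    have := congrArg Prod.snd hc; simpa [smul_eq_mul] using this
  have he1 : (n : ℤ) * lam.1 = (n : ℤ) * e₁ := by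
    have := congrArg Prod.fst he; simpa [smul_eq_mul] using this
  have he2 : (n : ℤ) * lam.2 = (n : ℤ) * e₂ := by
    have := congrArg Prod.snd he; simpa [smul_eq_mul] using this
  have hr : r = k - (n : ℤ) * (k / (n : ℤ)) := Int.emod_def k (n : ℤ)
  have hkey : r • lam = ((n : ℤ) * (c₁ - k / n * e₁), (n : ℤ) * (c₂ - k / n * e₂)) := by
    ext
    · show r * lam.1 = _
      linear_combination lam.1 * hr + hc1 - (k / (n : ℤ)) * he1
    · show r * lam.2 = _
      linear_combination lam.2 * hr + hc2 - (k / (n : ℤ)) * he2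
  have hmem : r.toNat ∈ {k : ℕ | 0 < k ∧ ∃ c₁ c₂ : ℤ, (k : ℤ) • lam = ((n : ℤ) * c₁, (n : ℤ) * c₂)} := by
    refine ⟨by omega, c₁ - k / n * e₁, c₂ - k / n * e₂, ?_⟩
    rwa [Int.toNat_of_nonneg hr0]
  have := hleast hmem
  omega

lemma not_mem_gamma_s6 {n : ℕ} (hn : 8 ≤ n) {l2 : ℤ}
    (hord : orderModN n ((2 : ℤ), l2)) (d : ℕ) (hd1 : 1 ≤ d) (hd3 : d ≤ 3)
    (γ : ℤ × ℤ) (hγ1 : γ.1 = (n : ℤ) - 2 * d)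
    (hγ : ∃ c₁ c₂ : ℤ, γ - ((n : ℤ) - d) • ((2 : ℤ), l2) = ((n : ℤ) * c₁, (n : ℤ) * c₂)) :
    γ ∉ GammaQO n ((2 : ℤ), l2) := by
  intro hmem
  obtain ⟨a, b, c, hγeq⟩ := mem_gamma_elim hmem
  obtain ⟨c₁, c₂, hc⟩ := hγ
  have hdvd : (n : ℤ) ∣ ((a : ℤ) - ((n : ℤ) - d)) := by
    apply dvd_of_smul_mem hord
    refine ⟨c₁ - b, c₂ - c, ?_⟩
    have h1 : ((a : ℤ) - ((n : ℤ) - d)) • ((2 : ℤ), l2)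
        = (γ - ((n : ℤ) - d) • ((2 : ℤ), l2)) - (((n : ℤ) * b, (n : ℤ) * c) : ℤ × ℤ) := by
      rw [hγeq]
      ext <;> simp <;> ring
    rw [h1, hc]
    ext <;> simp <;> ring
  obtain ⟨t, ht⟩ := hdvd
  have ha0 : (0 : ℤ) ≤ (a : ℤ) := Int.natCast_nonneg a
  have hN : (8 : ℤ) ≤ (n : ℤ) := by exact_mod_cast hn
  have hd3' : (d : ℤ) ≤ 3 := by exact_mod_cast hd3
  have hd1' : (1 : ℤ) ≤ (d : ℤ) := by exact_mod_cast hd1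
  have ht0 : 0 ≤ t := by
    by_contra h
    push_neg at h
    have : t ≤ -1 := by omega
    nlinarith
  have hage : (n : ℤ) - d ≤ (a : ℤ) := by nlinarith
  have hfst : (a : ℤ) * 2 + (n : ℤ) * b = (n : ℤ) - 2 * d := by
    have := hγ1
    rw [hγeq] at this
    simpa using this
  have hb0 : (0 : ℤ) ≤ (b : ℤ) := Int.natCast_nonneg b
  nlinarith

/-- From Proposition 4.6: for n ≥ 8, λ = (2,λ₂), λ₂ ∈ {1,2}, three possible
generalized Zariski exponents occur. -/
theorem stmt6 (n : ℕ) (hn : 8 ≤ n) (lam : ℤ × ℤ) (l2 : ℤ)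
    (hlam : lam = (2, l2)) (hl2 : l2 = 1 ∨ l2 = 2) (hord : orderModN n lam) :
    GTriple n lam
      (((n : ℤ) - 1) • lam + (n : ℤ) • ((-1, 0) : ℤ × ℤ))
      (((n : ℤ) - 2) • lam + (n : ℤ) • ((-1, 1) : ℤ × ℤ))
      (((n : ℤ) - 3) • lam + (n : ℤ) • ((-1, 2) : ℤ × ℤ)) := by
  subst hlam
  have hN : (8 : ℤ) ≤ (n : ℤ) := by exact_mod_cast hn
  have hl2' : (1 : ℤ) ≤ l2 ∧ l2 ≤ 2 := by rcases hl2 with rfl | rfl <;> norm_num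
  refine ⟨?_, ?_, ?_, ?_, ?_, ?_⟩
  · refine ⟨?_, ?_, ?_⟩ <;>
      (rw [Prod.le_def] <;> constructor <;> simp <;> nlinarith [hl2'.1, hl2'.2])
  · refine ⟨?_, ?_, ?_, ?_, ?_, ?_⟩ <;>
      (rw [Prod.le_def] <;> push_neg <;> intro h <;> simp at h ⊢ <;> nlinarith [hl2'.1, hl2'.2])
  · refine ⟨⟨?_, ?_⟩, ⟨?_, ?_⟩, ⟨?_, ?_⟩⟩ <;>
      first
      | (rw [Prod.le_def] <;> constructor <;> simp <;> nlinarith [hl2'.1, hl2'.2])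
      | (intro h <;> rw [Prod.ext_iff] at h <;> simp at h <;> nlinarith [hl2'.1, hl2'.2, h.1])
  · exact not_mem_gamma_s6 hn hord 1 (by norm_num) (by norm_num) _
      (by push_cast; simp; ring) ⟨-1, 0, by ext <;> simp <;> push_cast <;> ring⟩
  · exact not_mem_gamma_s6 hn hord 2 (by norm_num) (by norm_num) _
      (by push_cast; simp; ring) ⟨-1, 1, by ext <;> simp <;> push_cast <;> ring⟩
  · exact not_mem_gamma_s6 hn hord 3 (by norm_num) (by norm_num) _
      (by push_cast; simp; ring) ⟨-1, 2, by ext <;> simp <;> push_cast <;> ring⟩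
end

section
/- Let n ≥ 6 and λ = (2,2), and assume λ has order n modulo nℤ² (equivalently, n is odd). Then the three elements (n−1)λ + n(−1,0), (n−1)λ + n(0,−1), (n−2)λ + n(−1,1) lie in ℕ², are pairwise incomparable for the product order, each satisfies γ ≻ λ, and none of them belongs to Γ. -/
/-- Representation lemma: elements of Γ for λ = (2,2). -/
lemma gamma_rep (n : ℕ) (γ : ℤ × ℤ) (h : γ ∈ GammaQO n ((2 : ℤ), (2 : ℤ))) :
    ∃ a b c : ℕ, γ.1 = (n : ℤ) * a + 2 * c ∧ γ.2 = (n : ℤ) * b + 2 * c := by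
  induction h using AddSubmonoid.closure_induction with
  | mem x hx =>
    simp only [Set.mem_insert_iff, Set.mem_singleton_iff] at hx
    rcases hx with rfl | rfl | rfl
    · exact ⟨1, 0, 0, by simp, by simp⟩
    · exact ⟨0, 1, 0, by simp, by simp⟩
    · exact ⟨0, 0, 1, by simp, by simp⟩
  | zero => exact ⟨0, 0, 0, by simp, by simp⟩
  | add p q _ _ hp hq =>
    obtain ⟨a, b, c, h1, h2⟩ := hp
    obtain ⟨a', b', c', h1', h2'⟩ := hq
    exact ⟨a + a', b + b', c + c', by push_cast [Prod.fst_add, h1, h1']; ring,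
      by push_cast [Prod.snd_add, h2, h2']; ring⟩

/-- From Proposition 4.6: for n ≥ 6 and λ = (2,2) of order n mod nℤ²,
three possible generalized Zariski exponents occur. -/
theorem stmt7 (n : ℕ) (hn : 6 ≤ n) (lam : ℤ × ℤ) (hlam : lam = (2, 2))
    (hord : orderModN n lam) :
    GTriple n lam
      (((n : ℤ) - 1) • lam + (n : ℤ) • ((-1, 0) : ℤ × ℤ))
      (((n : ℤ) - 1) • lam + (n : ℤ) • ((0, -1) : ℤ × ℤ))
      (((n : ℤ) - 2) • lam + (n : ℤ) • ((-1, 1) : ℤ × ℤ)) := by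
  subst hlam
  -- n is odd
  have hodd : n % 2 = 1 := by
    by_contra h
    have h2 : n % 2 = 0 := by omega
    obtain ⟨m, hm⟩ : ∃ m, n = 2 * m := ⟨n / 2, by omega⟩
    have hmem : m ∈ {k : ℕ | 0 < k ∧ ∃ c₁ c₂ : ℤ,
        (k : ℤ) • ((2 : ℤ), (2 : ℤ)) = ((n : ℤ) * c₁, (n : ℤ) * c₂)} := by
      refine ⟨by omega, 1, 1, ?_⟩
      have : (m : ℤ) * 2 = (n : ℤ) := by push_cast [hm]; ring
      simp [Prod.smul_mk, smul_eq_mul, this]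
    have := hord.2 hmem
    omega
  have hnz : (0 : ℤ) < (n : ℤ) := by exact_mod_cast Nat.pos_of_ne_zero (by omega)
  -- simplify the three points
  have hx : (((n : ℤ) - 1) • ((2 : ℤ), (2 : ℤ)) + (n : ℤ) • ((-1, 0) : ℤ × ℤ))
      = ((n : ℤ) - 2, 2 * (n : ℤ) - 2) := by
    simp [Prod.smul_mk, Prod.ext_iff, smul_eq_mul]; constructor <;> ring
  have hy : (((n : ℤ) - 1) • ((2 : ℤ), (2 : ℤ)) + (n : ℤ) • ((0, -1) : ℤ × ℤ))
      = (2 * (n : ℤ) - 2, (n : ℤ) - 2) := by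
    simp [Prod.smul_mk, Prod.ext_iff, smul_eq_mul]; constructor <;> ring
  have hz : (((n : ℤ) - 2) • ((2 : ℤ), (2 : ℤ)) + (n : ℤ) • ((-1, 1) : ℤ × ℤ))
      = ((n : ℤ) - 4, 3 * (n : ℤ) - 4) := by
    simp [Prod.smul_mk, Prod.ext_iff, smul_eq_mul]; constructor <;> ring
  rw [hx, hy, hz]
  have hn6 : (6 : ℤ) ≤ (n : ℤ) := by exact_mod_cast hn
  refine ⟨⟨?_, ?_, ?_⟩, ⟨?_, ?_, ?_, ?_, ?_, ?_⟩, ⟨⟨?_, ?_⟩, ⟨?_, ?_⟩, ⟨?_, ?_⟩⟩, ?_, ?_, ?_⟩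
  · exact ⟨by simp; omega, by simp; omega⟩
  · exact ⟨by simp; omega, by simp; omega⟩
  · exact ⟨by simp; omega, by simp; omega⟩
  · rw [Prod.le_def]; push_neg; intro h; simp at h ⊢; omega
  · rw [Prod.le_def]; push_neg; intro h; simp at h ⊢; omega
  · rw [Prod.le_def]; push_neg; intro h; simp at h ⊢; omega
  · rw [Prod.le_def]; push_neg; intro h; simp at h ⊢; omega
  · rw [Prod.le_def]; push_neg; intro h; simp at h ⊢; omega
  · rw [Prod.le_def]; push_neg; intro h; simp at h ⊢; omega
  · exact ⟨by simp; omega, by simp; omega⟩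
  · simp [Prod.ext_iff]; omega
  · exact ⟨by simp; omega, by simp; omega⟩
  · simp [Prod.ext_iff]; omega
  · exact ⟨by simp; omega, by simp; omega⟩
  · simp [Prod.ext_iff]; omega
  · intro h
    obtain ⟨a, b, c, h1, h2⟩ := gamma_rep n _ h
    simp only at h1 h2
    rcases Nat.eq_zero_or_pos a with ha | ha
    · subst ha; simp at h1; omega
    · have : (n : ℤ) ≤ (n : ℤ) * a := le_mul_of_one_le_right (le_of_lt hnz)
        (by exact_mod_cast ha)
      have hc : (0 : ℤ) ≤ (c : ℤ) := Int.natCast_nonneg c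
      omega
  · intro h
    obtain ⟨a, b, c, h1, h2⟩ := gamma_rep n _ h
    simp only at h1 h2
    rcases Nat.eq_zero_or_pos b with hb | hb
    · subst hb; simp at h2; omega
    · have : (n : ℤ) ≤ (n : ℤ) * b := le_mul_of_one_le_right (le_of_lt hnz)
        (by exact_mod_cast hb)
      have hc : (0 : ℤ) ≤ (c : ℤ) := Int.natCast_nonneg c
      omega
  · intro h
    obtain ⟨a, b, c, h1, h2⟩ := gamma_rep n _ h
    simp only at h1 h2
    rcases Nat.eq_zero_or_pos a with ha | ha
    · subst ha; simp at h1; omega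
    · have : (n : ℤ) ≤ (n : ℤ) * a := le_mul_of_one_le_right (le_of_lt hnz)
        (by exact_mod_cast ha)
      have hc : (0 : ℤ) ≤ (c : ℤ) := Int.natCast_nonneg c
      omega
end

section
/- Let n = 5 and λ = (3,1). Then every γ ∈ Q₁ with γ ≻ λ and γ ∉ Γ has the form γ = 4λ + 5(−1,k) or γ = 3λ + 5(−1,k) for some k ∈ ℕ. -/
lemma mem_Gamma (r p q : ℤ) (hr : 0 ≤ r) (hp : 0 ≤ p) (hq : 0 ≤ q) :
    ((3*r+5*p, r+5*q) : ℤ×ℤ) ∈ GammaQO 5 (3,1) := by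
  lift r to ℕ using hr
  lift p to ℕ using hp
  lift q to ℕ using hq
  have h1 : ((5:ℤ), (0:ℤ)) ∈ GammaQO 5 ((3:ℤ),(1:ℤ)) :=
    AddSubmonoid.subset_closure (by norm_num)
  have h2 : ((0:ℤ), (5:ℤ)) ∈ GammaQO 5 ((3:ℤ),(1:ℤ)) :=
    AddSubmonoid.subset_closure (by norm_num)
  have h3 : ((3:ℤ), (1:ℤ)) ∈ GammaQO 5 ((3:ℤ),(1:ℤ)) :=
    AddSubmonoid.subset_closure (by norm_num)
  have hm := add_mem (add_mem (AddSubmonoid.nsmul_mem _ h3 r)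
    (AddSubmonoid.nsmul_mem _ h1 p)) (AddSubmonoid.nsmul_mem _ h2 q)
  have : ((3*(r:ℤ)+5*p, (r:ℤ)+5*q) : ℤ×ℤ) = r • ((3:ℤ),(1:ℤ)) + p • ((5:ℤ),(0:ℤ)) + q • ((0:ℤ),(5:ℤ)) := by
    simp [Prod.ext_iff]
    constructor <;> ring
  rw [this]; exact hm

/-- Proposition 4.6 core, case n = 5, λ = (3,1). -/
theorem stmt9 (lam : ℤ × ℤ) (hlam : lam = (3, 1))
    (γ : ℤ × ℤ) (hγQ : memQ1 5 lam γ) (hle : lam ≤ γ) (hne : γ ≠ lam)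
    (hΓ : γ ∉ GammaQO 5 lam) :
    ∃ k : ℕ, γ = (4 : ℤ) • lam + (5 : ℤ) • (((-1 : ℤ), (k : ℤ)) : ℤ × ℤ) ∨
             γ = (3 : ℤ) • lam + (5 : ℤ) • (((-1 : ℤ), (k : ℤ)) : ℤ × ℤ) := by
  subst hlam
  obtain ⟨a, c₁, c₂, hγ⟩ := hγQ
  obtain ⟨x, y⟩ := γ
  have hx : x = 3*a + 5*c₁ := by
    have := congrArg Prod.fst hγ; simp at this; linarith
  have hy : y = a + 5*c₂ := by
    have := congrArg Prod.snd hγ; simp at this; linarith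
  have hlx : (3:ℤ) ≤ x := hle.1
  have hly : (1:ℤ) ≤ y := hle.2
  clear hγ hne hle
  obtain ⟨t, r, hr0, hr5, rfl⟩ : ∃ t r : ℤ, 0 ≤ r ∧ r < 5 ∧ a = 5*t + r :=
    ⟨a/5, a%5, Int.emod_nonneg _ (by norm_num), Int.emod_lt_of_pos _ (by norm_num), by omega⟩
  have key : ∀ r' p q : ℤ, 0 ≤ r' → 0 ≤ p → 0 ≤ q → x = 3*r'+5*p → y = r'+5*q → False := by
    intro r' p q h1 h2 h3 h4 h5
    exact hΓ (h4 ▸ h5 ▸ mem_Gamma r' p q h1 h2 h3)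
  interval_cases r
  · exact (key 0 (3*t+c₁) (t+c₂) le_rfl (by omega) (by omega) (by omega) (by omega)).elim
  · exact (key 1 (3*t+c₁) (t+c₂) (by norm_num) (by omega) (by omega) (by omega) (by omega)).elim
  · exact (key 2 (3*t+c₁) (t+c₂) (by norm_num) (by omega) (by omega) (by omega) (by omega)).elim
  · -- r = 3 : either in Γ or x = 4
    by_cases hp : 0 ≤ 3*t+c₁
    · exact (key 3 (3*t+c₁) (t+c₂) (by norm_num) hp (by omega) (by omega) (by omega)).elim
    · refine ⟨(t+c₂).toNat, Or.inr ?_⟩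
      have hq : (0:ℤ) ≤ t + c₂ := by omega
      have hT : ((t+c₂).toNat : ℤ) = t + c₂ := Int.toNat_of_nonneg hq
      simp only [Prod.smul_mk, smul_eq_mul, Prod.mk_add_mk, Prod.mk.injEq]
      rw [hT]
      constructor <;> omega
  · by_cases hp : 0 ≤ 3*t+c₁
    · exact (key 4 (3*t+c₁) (t+c₂) (by norm_num) hp (by omega) (by omega) (by omega)).elim
    · refine ⟨(t+c₂).toNat, Or.inl ?_⟩
      have hq : (0:ℤ) ≤ t + c₂ := by omega
      have hT : ((t+c₂).toNat : ℤ) = t + c₂ := Int.toNat_of_nonneg hq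
      simp only [Prod.smul_mk, smul_eq_mul, Prod.mk_add_mk, Prod.mk.injEq]
      rw [hT]
      constructor <;> omega
end

section
/- Let n = 5 and λ = (2,1). Then every γ ∈ Q₁ with γ ≻ λ and γ ∉ Γ has the form γ = 4λ + 5(−1,k) for some k ∈ ℕ. -/
lemma gamma_mem' (a b c : ℕ) :
    ((2*(a:ℤ)+5*b, (a:ℤ)+5*c) : ℤ × ℤ) ∈ GammaQO 5 ((2:ℤ),(1:ℤ)) := by
  have h1 : (((5:ℕ):ℤ), (0:ℤ)) ∈ GammaQO 5 ((2:ℤ),(1:ℤ)) :=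
    AddSubmonoid.subset_closure (by simp)
  have h2 : ((0:ℤ), ((5:ℕ):ℤ)) ∈ GammaQO 5 ((2:ℤ),(1:ℤ)) :=
    AddSubmonoid.subset_closure (by simp)
  have h3 : ((2:ℤ),(1:ℤ)) ∈ GammaQO 5 ((2:ℤ),(1:ℤ)) :=
    AddSubmonoid.subset_closure (by simp)
  have := AddSubmonoid.add_mem _ (AddSubmonoid.add_mem _ (AddSubmonoid.nsmul_mem _ h3 a)
    (AddSubmonoid.nsmul_mem _ h1 b)) (AddSubmonoid.nsmul_mem _ h2 c)
  convert this using 1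
  ext <;> simp [Prod.smul_def]  <;> ring

/-- Proposition 4.6 core, case n = 5, λ = (2,1). -/
theorem stmt10 (lam : ℤ × ℤ) (hlam : lam = (2, 1))
    (γ : ℤ × ℤ) (hγQ : memQ1 5 lam γ) (hle : lam ≤ γ) (hne : γ ≠ lam)
    (hΓ : γ ∉ GammaQO 5 lam) :
    ∃ k : ℕ, γ = (4 : ℤ) • lam + (5 : ℤ) • (((-1 : ℤ), (k : ℤ)) : ℤ × ℤ) := by
  subst hlam
  obtain ⟨x, y⟩ := γ
  obtain ⟨a, c₁, c₂, heq⟩ := hγQ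
  have hx : x = 2*a + 5*c₁ := by
    have := congrArg Prod.fst heq; simp [Prod.smul_def] at this; omega
  have hy : y = a + 5*c₂ := by
    have := congrArg Prod.snd heq; simp [Prod.smul_def] at this; omega
  have hdvd : (5:ℤ) ∣ x - 2*y := ⟨c₁ - 2*c₂, by omega⟩
  have hlex : (2:ℤ) ≤ x := hle.1
  have hley : (1:ℤ) ≤ y := hle.2
  -- if x ≥ 2*(y % 5), then γ ∈ Γ
  have key : ¬ (2 * (y % 5) ≤ x) := by
    intro hge
    apply hΓ
    have := gamma_mem' (y % 5).toNat ((x - 2*(y % 5))/5).toNat ((y - y % 5)/5).toNat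
    convert this using 1
    ext <;> simp <;> omega
  -- So x < 2*(y%5), with x ≥ 2, 5 ∣ x - 2y: forces x = 3, y % 5 = 4
  have hx3 : x = 3 ∧ y % 5 = 4 := by omega
  obtain ⟨k, hk⟩ : ∃ k : ℕ, y = 4 + 5*(k:ℤ) := ⟨(y-4).toNat/5, by omega⟩
  exact ⟨k, by ext <;> simp [Prod.smul_def] <;> omega⟩
end

section
/- Let n = 4 and λ = (λ₁,1) with λ₁ ∈ {2,3}. Then every γ ∈ Q₁ with γ ≻ λ and γ ∉ Γ has the form γ = 3λ + 4(−1,k) for some k ∈ ℕ. -/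
lemma memGamma (n : ℕ) (lam : ℤ × ℤ) (x y z : ℕ) :
    x • (((n : ℤ), 0) : ℤ × ℤ) + y • ((0, (n : ℤ)) : ℤ × ℤ) + z • lam ∈ GammaQO n lam := by
  refine add_mem (add_mem (nsmul_mem ?_ x) (nsmul_mem ?_ y)) (nsmul_mem ?_ z) <;>
    apply AddSubmonoid.subset_closure
  · exact Set.mem_insert _ _
  · exact Set.mem_insert_of_mem _ (Set.mem_insert _ _)
  · exact Set.mem_insert_of_mem _ (Set.mem_insert_of_mem _ rfl)

/-- Proposition 4.6(c) core: n = 4, λ = (λ₁,1), λ₁ ∈ {2,3}. -/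
theorem stmt12 (l1 : ℤ) (hl1 : l1 = 2 ∨ l1 = 3) (lam : ℤ × ℤ) (hlam : lam = (l1, 1))
    (γ : ℤ × ℤ) (hγQ : memQ1 4 lam γ) (hle : lam ≤ γ) (hne : γ ≠ lam)
    (hΓ : γ ∉ GammaQO 4 lam) :
    ∃ k : ℕ, γ = (3 : ℤ) • lam + (4 : ℤ) • (((-1 : ℤ), (k : ℤ)) : ℤ × ℤ) := by
  subst hlam
  obtain ⟨a, c₁, c₂, heq⟩ := hγQ
  have h1 : γ.1 = a * l1 + 4 * c₁ := by rw [heq]; simp [Prod.smul_def]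
  have h2 : γ.2 = a + 4 * c₂ := by rw [heq]; simp [Prod.smul_def]
  have hle1 : l1 ≤ γ.1 := hle.1
  have hle2 : (1 : ℤ) ≤ γ.2 := hle.2
  obtain ⟨q, r, hr0, hr3, har⟩ : ∃ q r : ℤ, 0 ≤ r ∧ r ≤ 3 ∧ a = 4 * q + r :=
    ⟨a / 4, a % 4, Int.emod_nonneg a (by norm_num), by omega, by omega⟩
  set d₁ : ℤ := c₁ + q * l1 with hd₁
  set d₂ : ℤ := c₂ + q with hd₂
  have h1' : γ.1 = r * l1 + 4 * d₁ := by rw [h1, hd₁, har]; ring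
  have h2' : γ.2 = r + 4 * d₂ := by rw [h2, hd₂, har]; ring
  have hd₂0 : 0 ≤ d₂ := by omega
  by_cases h : 0 ≤ d₁
  · refine absurd ?_ hΓ
    have hEq : γ = d₁.toNat • (((4 : ℕ) : ℤ), (0 : ℤ)) + d₂.toNat • ((0 : ℤ), ((4 : ℕ) : ℤ))
        + r.toNat • ((l1, 1) : ℤ × ℤ) := by
      rw [Prod.ext_iff]
      simp only [Prod.smul_def, Prod.fst_add, Prod.snd_add, smul_eq_mul, nsmul_eq_mul]
      push_cast
      refine ⟨?_, ?_⟩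
      · rcases hl1 with rfl | rfl <;> omega
      · omega
    rw [hEq]
    exact memGamma 4 (l1, 1) d₁.toNat d₂.toNat r.toNat
  · have hd₁1 : d₁ = -1 ∧ r = 3 := by rcases hl1 with rfl | rfl <;> omega
    refine ⟨d₂.toNat, ?_⟩
    rw [Prod.ext_iff]
    simp only [Prod.smul_def, Prod.fst_add, Prod.snd_add, smul_eq_mul]
    push_cast
    refine ⟨?_, ?_⟩
    · rcases hl1 with rfl | rfl <;> omega
    · omega
end

section
/- Let n = 3 and λ = (λ₁, λ₂) with 1 ≤ λ₂ ≤ λ₁ ≤ 5 and λ of order 3 modulo 3ℤ² (equivalently λ ≠ (3,3)). If γ ∈ Q₁ satisfies γ ≻ λ and γ ∉ Γ ∪ ⋃_{i ∈ {1,2}, λ_i ≥ 3} (Γ + 2λ − ν_i), then λ₂ ≥ 3 and γ = 2λ + 3(−1,−1). -/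
lemma memG (lam : ℤ × ℤ) (m c d : ℤ) (hm : 0 ≤ m) (hc : 0 ≤ c) (hd : 0 ≤ d) :
    (m • lam + (3 * c, 3 * d) : ℤ × ℤ) ∈ GammaQO 3 lam := by
  lift m to ℕ using hm
  lift c to ℕ using hc
  lift d to ℕ using hd
  have hl : lam ∈ GammaQO 3 lam := AddSubmonoid.subset_closure (by simp)
  have hx : ((3:ℤ), (0:ℤ)) ∈ GammaQO 3 lam := AddSubmonoid.subset_closure (by norm_num [GammaQO])
  have hy : ((0:ℤ), (3:ℤ)) ∈ GammaQO 3 lam := AddSubmonoid.subset_closure (by norm_num [GammaQO])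
  have := AddSubmonoid.add_mem _ (AddSubmonoid.add_mem _
    (AddSubmonoid.nsmul_mem _ hl m)
    (AddSubmonoid.nsmul_mem _ hx c)) (AddSubmonoid.nsmul_mem _ hy d)
  convert this using 1
  simp [Prod.smul_def, Prod.ext_iff, mul_comm]

/-- Proposition 4.6(e) core, n = 3: the only possible generalized Zariski
exponent is 2λ + 3(−1,−1), and only when λ₂ ≥ 3. -/
theorem stmt13 (lam : ℤ × ℤ) (h1 : 1 ≤ lam.2) (h2 : lam.2 ≤ lam.1)
    (h3 : lam.1 ≤ 5) (hord : orderModN 3 lam)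
    (γ : ℤ × ℤ) (hγQ : memQ1 3 lam γ) (hle : lam ≤ γ) (hne : γ ≠ lam)
    (hbad : ¬ memBad 3 lam γ) :
    3 ≤ lam.2 ∧ γ = (2 : ℤ) • lam + (3 : ℤ) • ((-1, -1) : ℤ × ℤ) := by
  obtain ⟨a, c₁, c₂, hγ⟩ := hγQ
  obtain ⟨l1, l2⟩ := lam
  obtain ⟨g1, g2⟩ := γ
  simp only at h1 h2 h3
  obtain ⟨hle1, hle2⟩ : l1 ≤ g1 ∧ l2 ≤ g2 := hle
  simp only [Prod.smul_def, smul_eq_mul, Prod.mk_add_mk, Prod.mk.injEq,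
    Nat.cast_ofNat] at hγ
  obtain ⟨e1, e2⟩ := hγ
  have ha : a = 3 * (a / 3) + a % 3 := by omega
  set r := a % 3 with hrdef
  set q := a / 3 with hqdef
  have hr0 : 0 ≤ r := by omega
  have hr3 : r < 3 := by omega
  set u := c₁ + q * l1 with hudef
  set v := c₂ + q * l2 with hvdef
  have e1' : g1 = r * l1 + 3 * u := by rw [e1, ha]; ring
  have e2' : g2 = r * l2 + 3 * v := by rw [e2, ha]; ring
  have hr : r = 0 ∨ r = 1 ∨ r = 2 := by omega
  -- helper to get a contradiction from membership in Γ
  rcases hr with hr | hr | hr <;> rw [hr] at e1' e2'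
  · -- r = 0 : γ ∈ Γ
    exfalso
    apply hbad
    left
    have hu : 0 ≤ u := by omega
    have hv : 0 ≤ v := by omega
    have := memG (l1, l2) 0 u v le_rfl hu hv
    have heq : ((g1, g2) : ℤ × ℤ) = (0 : ℤ) • (l1, l2) + (3 * u, 3 * v) := by
      simp [Prod.ext_iff]; omega
    rwa [heq]
  · -- r = 1 : γ = λ + 3(u,v) ∈ Γ
    exfalso
    apply hbad
    left
    have hu : 0 ≤ u := by omega
    have hv : 0 ≤ v := by omega
    have := memG (l1, l2) 1 u v zero_le_one hu hv
    have heq : ((g1, g2) : ℤ × ℤ) = (1 : ℤ) • (l1, l2) + (3 * u, 3 * v) := by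
      simp [Prod.ext_iff, Prod.smul_def]; omega
    rwa [heq]
  · -- r = 2
    have hu1 : -1 ≤ u := by omega
    have hv1 : -1 ≤ v := by omega
    rcases le_or_gt 0 u with hu | hu
    · rcases le_or_gt 0 v with hv | hv
      · -- u,v ≥ 0 : γ ∈ Γ
        exfalso
        apply hbad
        left
        have := memG (l1, l2) 2 u v (by norm_num) hu hv
        have heq : ((g1, g2) : ℤ × ℤ) = (2 : ℤ) • (l1, l2) + (3 * u, 3 * v) := by
          simp [Prod.ext_iff, Prod.smul_def]; omega
        rwa [heq]
      · -- v = -1 : third bad clause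
        exfalso
        have hv' : v = -1 := by omega
        apply hbad
        right; right
        refine ⟨by simpa using (by omega : (3:ℤ) ≤ l2), (0:ℤ) • (l1, l2) + (3 * u, 3 * 0),
          memG (l1, l2) 0 u 0 le_rfl hu le_rfl, ?_⟩
        simp [Prod.ext_iff, Prod.smul_def]; omega
    · rcases le_or_gt 0 v with hv | hv
      · -- u = -1 : second bad clause
        exfalso
        have hu' : u = -1 := by omega
        apply hbad
        right; left
        refine ⟨by simpa using (by omega : (3:ℤ) ≤ l1), (0:ℤ) • (l1, l2) + (3 * 0, 3 * v),
          memG (l1, l2) 0 0 v le_rfl le_rfl hv, ?_⟩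
        simp [Prod.ext_iff, Prod.smul_def]; omega
      · -- u = v = -1 : the conclusion
        have hu' : u = -1 := by omega
        have hv' : v = -1 := by omega
        refine ⟨by omega, ?_⟩
        simp [Prod.ext_iff, Prod.smul_def]
        omega
end

section
/- Let n = 3 and λ = (λ₁, λ₂) with 1 ≤ λ₂ ≤ 5, 6 ≤ λ₁ ≤ 8, and λ of order 3 modulo 3ℤ² (equivalently λ ≠ (6,3)). If γ ∈ Q₁ satisfies γ ≻ λ and γ ∉ Γ ∪ ⋃_{i ∈ {1,2}, λ_i ≥ 3} (Γ + 2λ − ν_i), then either γ = 2λ + 3(−2,k) for some integer k ≥ −1 with k ≥ 0 whenever λ₂ ≤ 2, or λ₂ ≥ 3 and γ = 2λ + 3(−1,−1). -/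
/-- Auxiliary: coordinate-wise criterion for membership in Γ (n = 3). -/
lemma mem_Gamma' (lam : ℤ × ℤ) (b p q : ℤ) (hb : 0 ≤ b) (hp : 0 ≤ p) (hq : 0 ≤ q)
    (γ : ℤ × ℤ) (e1 : γ.1 = b * lam.1 + 3 * p) (e2 : γ.2 = b * lam.2 + 3 * q) :
    γ ∈ GammaQO 3 lam := by
  have h30 : (((3:ℤ), 0) : ℤ × ℤ) ∈ GammaQO 3 lam := by
    apply AddSubmonoid.subset_closure; norm_num
  have h03 : (((0:ℤ), (3:ℤ)) : ℤ × ℤ) ∈ GammaQO 3 lam := by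
    apply AddSubmonoid.subset_closure; norm_num
  have hl : lam ∈ GammaQO 3 lam := by
    apply AddSubmonoid.subset_closure; simp
  have hmem : b.toNat • lam + p.toNat • (((3:ℤ), 0) : ℤ × ℤ)
      + q.toNat • (((0:ℤ), (3:ℤ)) : ℤ × ℤ) ∈ GammaQO 3 lam :=
    add_mem (add_mem (AddSubmonoid.nsmul_mem _ hl _) (AddSubmonoid.nsmul_mem _ h30 _))
      (AddSubmonoid.nsmul_mem _ h03 _)
  have hb' : (b.toNat : ℤ) = b := Int.toNat_of_nonneg hb
  have hp' : (p.toNat : ℤ) = p := Int.toNat_of_nonneg hp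
  have hq' : (q.toNat : ℤ) = q := Int.toNat_of_nonneg hq
  have : γ = b.toNat • lam + p.toNat • (((3:ℤ), 0) : ℤ × ℤ)
      + q.toNat • (((0:ℤ), (3:ℤ)) : ℤ × ℤ) := by
    apply Prod.ext <;>
      simp only [Prod.fst_add, Prod.snd_add, Prod.smul_fst, Prod.smul_snd, smul_eq_mul,
        nsmul_eq_mul, Prod.fst_mul, Prod.snd_mul, Prod.fst_natCast, Prod.snd_natCast,
        e1, e2] <;>
      rw [hb', hp', hq'] <;> ring
  rw [this]; exact hmem

/-- Proposition 4.8(a) core, n = 3, 1 ≤ λ₂ ≤ 5 ≤ 6 ≤ λ₁ ≤ 8. -/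
theorem stmt14 (lam : ℤ × ℤ) (h1 : 1 ≤ lam.2) (h2 : lam.2 ≤ 5)
    (h3 : 6 ≤ lam.1) (h4 : lam.1 ≤ 8) (hord : orderModN 3 lam)
    (γ : ℤ × ℤ) (hγQ : memQ1 3 lam γ) (hle : lam ≤ γ) (hne : γ ≠ lam)
    (hbad : ¬ memBad 3 lam γ) :
    (∃ k : ℤ, -1 ≤ k ∧ (lam.2 ≤ 2 → 0 ≤ k) ∧
      γ = (2 : ℤ) • lam + (3 : ℤ) • (((-2 : ℤ), k) : ℤ × ℤ)) ∨
    (3 ≤ lam.2 ∧ γ = (2 : ℤ) • lam + (3 : ℤ) • ((-1, -1) : ℤ × ℤ)) := by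
  obtain ⟨a, c₁, c₂, hγ⟩ := hγQ
  have e1 : γ.1 = a * lam.1 + 3 * c₁ := by
    rw [hγ]; push_cast; simp [smul_eq_mul]
  have e2 : γ.2 = a * lam.2 + 3 * c₂ := by
    rw [hγ]; push_cast; simp [smul_eq_mul]
  have hle1 : lam.1 ≤ γ.1 := hle.1
  have hle2 : lam.2 ≤ γ.2 := hle.2
  obtain ⟨r, d1, d2, hr01, f1, f2⟩ :
      ∃ r d1 d2 : ℤ, (r = 0 ∨ r = 1 ∨ r = 2) ∧
        γ.1 = r * lam.1 + 3 * d1 ∧ γ.2 = r * lam.2 + 3 * d2 := by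
    refine ⟨a % 3, c₁ + a / 3 * lam.1, c₂ + a / 3 * lam.2, by omega, ?_, ?_⟩
    · linear_combination e1 - lam.1 * (Int.mul_ediv_add_emod a 3)
    · linear_combination e2 - lam.2 * (Int.mul_ediv_add_emod a 3)
  rcases hr01 with rfl | rfl | rfl
  · exact absurd (Or.inl (mem_Gamma' lam 0 d1 d2 le_rfl (by omega) (by omega) γ
      (by omega) (by omega))) hbad
  · exact absurd (Or.inl (mem_Gamma' lam 1 d1 d2 (by omega) (by omega) (by omega) γ
      (by omega) (by omega))) hbad
  · have hd1 : -2 ≤ d1 := by omega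
    have hd2 : -1 ≤ d2 := by omega
    rcases (show d1 = -2 ∨ d1 = -1 ∨ 0 ≤ d1 by omega) with rfl | rfl | h
    · left
      refine ⟨d2, hd2, fun hl2 => by omega, ?_⟩
      apply Prod.ext <;>
        simp only [Prod.fst_add, Prod.snd_add, Prod.smul_fst, Prod.smul_snd, smul_eq_mul] <;>
        omega
    · rcases (show d2 = -1 ∨ 0 ≤ d2 by omega) with rfl | h2'
      · right
        refine ⟨by omega, ?_⟩
        apply Prod.ext <;>
          simp only [Prod.fst_add, Prod.snd_add, Prod.smul_fst, Prod.smul_snd, smul_eq_mul] <;>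
          omega
      · refine absurd (Or.inr (Or.inl ⟨by push_cast; omega, (0, 3 * d2), ?_, ?_⟩)) hbad
        · exact mem_Gamma' lam 0 0 d2 le_rfl le_rfl h2' _ (by ring) (by ring)
        · apply Prod.ext <;>
            simp only [Prod.fst_add, Prod.snd_add, Prod.fst_sub, Prod.snd_sub,
              Prod.smul_fst, Prod.smul_snd, smul_eq_mul] <;>
            push_cast <;> omega
    · rcases (show d2 = -1 ∨ 0 ≤ d2 by omega) with rfl | h2'
      · refine absurd (Or.inr (Or.inr ⟨by push_cast; omega, (3 * d1, 0), ?_, ?_⟩)) hbad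
        · exact mem_Gamma' lam 0 d1 0 le_rfl h le_rfl _ (by ring) (by ring)
        · apply Prod.ext <;>
            simp only [Prod.fst_add, Prod.snd_add, Prod.fst_sub, Prod.snd_sub,
              Prod.smul_fst, Prod.smul_snd, smul_eq_mul] <;>
            push_cast <;> omega
      · exact absurd (Or.inl (mem_Gamma' lam 2 d1 d2 (by omega) h h2' γ (by omega) (by omega)))
          hbad
end

section
/- Let n = 4 and λ = (λ₁, λ₂) with λ₂ ∈ {1,2,3}, λ₁ ∈ {4,5}, and λ of order 4 modulo 4ℤ² (equivalently λ ≠ (4,2)). If γ ∈ Q₁ satisfies γ ≻ λ and γ ∉ Γ ∪ (Γ + 2λ − (4,0)), then either γ = 3λ + 4(−2,k) for some integer k ≥ −1 with k ≥ 0 whenever λ₂ = 1, or λ₂ ≥ 2 and γ = 3λ + 4(k,−1) for some integer k ≥ −1. -/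
lemma memGamma' (lam γ : ℤ × ℤ) (b d₁ d₂ : ℤ) (hb : 0 ≤ b) (h1 : 0 ≤ d₁) (h2 : 0 ≤ d₂)
    (e1 : γ.1 = b * lam.1 + 4 * d₁) (e2 : γ.2 = b * lam.2 + 4 * d₂) :
    γ ∈ GammaQO 4 lam := by
  have hγ : γ = b.toNat • lam + (d₁.toNat • (((4:ℤ), 0) : ℤ × ℤ)
      + d₂.toNat • ((0, (4:ℤ)) : ℤ × ℤ)) := by
    have hb' : (b.toNat : ℤ) = b := Int.toNat_of_nonneg hb
    have h1' : (d₁.toNat : ℤ) = d₁ := Int.toNat_of_nonneg h1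
    have h2' : (d₂.toNat : ℤ) = d₂ := Int.toNat_of_nonneg h2
    apply Prod.ext <;> simp [nsmul_eq_mul, hb', h1', h2'] <;> omega
  rw [hγ, GammaQO]
  have m1 : (((4:ℤ),0) : ℤ × ℤ) ∈ AddSubmonoid.closure {(((4:ℕ):ℤ), 0), (0, ((4:ℕ):ℤ)), lam} :=
    AddSubmonoid.subset_closure (by simp)
  have m2 : ((0,(4:ℤ)) : ℤ × ℤ) ∈ AddSubmonoid.closure {(((4:ℕ):ℤ), 0), (0, ((4:ℕ):ℤ)), lam} :=
    AddSubmonoid.subset_closure (by simp)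
  have m3 : lam ∈ AddSubmonoid.closure {(((4:ℕ):ℤ), 0), (0, ((4:ℕ):ℤ)), lam} :=
    AddSubmonoid.subset_closure (by simp)
  exact add_mem (nsmul_mem m3 _) (add_mem (nsmul_mem m1 _) (nsmul_mem m2 _))

/-- Proposition 4.8(b) core, n = 4, λ₂ ∈ {1,2,3}, λ₁ ∈ {4,5}, λ ≠ (4,2). -/
theorem stmt15 (lam : ℤ × ℤ) (h1 : lam.2 = 1 ∨ lam.2 = 2 ∨ lam.2 = 3)
    (h2 : lam.1 = 4 ∨ lam.1 = 5) (hord : orderModN 4 lam)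
    (γ : ℤ × ℤ) (hγQ : memQ1 4 lam γ) (hle : lam ≤ γ) (hne : γ ≠ lam)
    (hΓ : γ ∉ GammaQO 4 lam)
    (hΓ2 : ¬ ∃ g ∈ GammaQO 4 lam, γ = g + (2 : ℤ) • lam - ((4 : ℤ), 0)) :
    (∃ k : ℤ, -1 ≤ k ∧ (lam.2 = 1 → 0 ≤ k) ∧
      γ = (3 : ℤ) • lam + (4 : ℤ) • (((-2 : ℤ), k) : ℤ × ℤ)) ∨
    (2 ≤ lam.2 ∧ ∃ k : ℤ, -1 ≤ k ∧
      γ = (3 : ℤ) • lam + (4 : ℤ) • ((k, (-1 : ℤ)) : ℤ × ℤ)) := by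
  obtain ⟨a, c₁, c₂, hγ⟩ := hγQ
  have e1 : γ.1 = a * lam.1 + 4 * c₁ := by rw [hγ]; simp [smul_eq_mul]
  have e2 : γ.2 = a * lam.2 + 4 * c₂ := by rw [hγ]; simp [smul_eq_mul]
  obtain ⟨q, r, hr0, hr4, rfl⟩ : ∃ q r, 0 ≤ r ∧ r < 4 ∧ a = 4 * q + r :=
    ⟨a / 4, a % 4, Int.emod_nonneg a (by norm_num), Int.emod_lt_of_pos a (by norm_num), by omega⟩
  obtain ⟨d₁, f1⟩ : ∃ d, γ.1 = r * lam.1 + 4 * d := ⟨c₁ + q * lam.1, by rw [e1]; ring⟩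
  obtain ⟨d₂, f2⟩ : ∃ d, γ.2 = r * lam.2 + 4 * d := ⟨c₂ + q * lam.2, by rw [e2]; ring⟩
  clear e1 e2 hγ hord hne
  have g1 : lam.1 ≤ γ.1 := hle.1
  have g2 : lam.2 ≤ γ.2 := hle.2
  interval_cases r
  · exact absurd (memGamma' lam γ 0 d₁ d₂ le_rfl (by omega) (by omega) (by omega) (by omega)) hΓ
  · exact absurd (memGamma' lam γ 1 d₁ d₂ (by norm_num) (by omega) (by omega) (by omega) (by omega)) hΓ
  · -- r = 2
    by_cases hd : 0 ≤ d₁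
    · exact absurd (memGamma' lam γ 2 d₁ d₂ (by norm_num) hd (by omega) (by omega) (by omega)) hΓ
    · refine absurd ⟨γ - (2:ℤ) • lam + ((4:ℤ), 0), ?_, by abel⟩ hΓ2
      refine memGamma' lam _ 0 0 d₂ le_rfl le_rfl (by omega) ?_ ?_ <;>
        simp [smul_eq_mul] <;> omega
  · -- r = 3
    by_cases h01 : 0 ≤ d₁
    · by_cases h02 : 0 ≤ d₂
      · exact absurd (memGamma' lam γ 3 d₁ d₂ (by norm_num) h01 h02 (by omega) (by omega)) hΓ
      · refine Or.inr ⟨by omega, d₁, by omega, ?_⟩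
        apply Prod.ext <;> simp [smul_eq_mul] <;> omega
    · have hd : d₁ = -1 ∨ d₁ = -2 := by omega
      rcases hd with hd | hd
      · by_cases h02 : 0 ≤ d₂
        · refine absurd ⟨γ - (2:ℤ) • lam + ((4:ℤ), 0), ?_, by abel⟩ hΓ2
          refine memGamma' lam _ 1 0 d₂ (by norm_num) le_rfl h02 ?_ ?_ <;>
            simp [smul_eq_mul] <;> omega
        · refine Or.inr ⟨by omega, -1, by omega, ?_⟩
          apply Prod.ext <;> simp [smul_eq_mul] <;> omega
      · refine Or.inl ⟨d₂, by omega, by omega, ?_⟩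
        apply Prod.ext <;> simp [smul_eq_mul] <;> omega
end

section
/- Let n = 5 and λ = (4, λ₂) with λ₂ ∈ {1,2,3}. Then the three elements 4λ + 5(−2,1), 4λ + 5(−1,0), 3λ + 5(−1,1) lie in ℕ², are pairwise incomparable for the product order, each satisfies γ ≻ λ, and none of them belongs to Γ. -/
lemma mem_gammaQO (n : ℕ) (lam γ : ℤ × ℤ) (h : γ ∈ GammaQO n lam) :
    ∃ a b c : ℕ, γ = (a : ℤ) • ((n : ℤ), (0:ℤ)) + (b : ℤ) • ((0:ℤ), (n : ℤ)) + (c : ℤ) • lam := by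
  induction h using AddSubmonoid.closure_induction with
  | mem u hu =>
    simp only [Set.mem_insert_iff, Set.mem_singleton_iff] at hu
    rcases hu with h | h | h
    · exact ⟨1, 0, 0, by simp [h]⟩
    · exact ⟨0, 1, 0, by simp [h]⟩
    · exact ⟨0, 0, 1, by simp [h]⟩
  | zero => exact ⟨0, 0, 0, by simp⟩
  | add u v _ _ hu hv =>
    obtain ⟨a, b, c, rfl⟩ := hu
    obtain ⟨a', b', c', rfl⟩ := hv
    exact ⟨a + a', b + b', c + c', by push_cast; module⟩

/-- Discussion before Proposition 4.8: n = 5, λ = (4,λ₂), λ₂ ∈ {1,2,3}. -/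
theorem stmt16 (l2 : ℤ) (hl2 : l2 = 1 ∨ l2 = 2 ∨ l2 = 3) (lam : ℤ × ℤ)
    (hlam : lam = (4, l2)) :
    GTriple 5 lam
      ((4 : ℤ) • lam + (5 : ℤ) • ((-2, 1) : ℤ × ℤ))
      ((4 : ℤ) • lam + (5 : ℤ) • ((-1, 0) : ℤ × ℤ))
      ((3 : ℤ) • lam + (5 : ℤ) • ((-1, 1) : ℤ × ℤ)) := by
  have hb : 1 ≤ l2 ∧ l2 ≤ 3 := by rcases hl2 with h | h | h <;> omega
  subst hlam
  refine ⟨?_, ?_, ?_, ?_, ?_, ?_⟩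
  · refine ⟨⟨?_, ?_⟩, ⟨?_, ?_⟩, ⟨?_, ?_⟩⟩ <;> simp <;> omega
  · refine ⟨?_, ?_, ?_, ?_, ?_, ?_⟩ <;> simp [Prod.le_def] <;> omega
  · refine ⟨⟨?_, ?_⟩, ⟨?_, ?_⟩, ⟨?_, ?_⟩⟩ <;>
      simp [Prod.le_def, Prod.ext_iff] <;> omega
  all_goals
    intro h
    obtain ⟨a, b, c, hc⟩ := mem_gammaQO _ _ _ h
    rw [Prod.ext_iff] at hc
    simp only [Prod.fst_add, Prod.snd_add, Prod.smul_fst, Prod.smul_snd, smul_eq_mul] at hc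
    omega
end

section
/- Let n = 5 and λ = (3, λ₂) with λ₂ ∈ {2,3}. Then the three elements 4λ + 5(−1,0), 4λ + 5(0,−1), 3λ + 5(−1,1) lie in ℕ², are pairwise incomparable for the product order, each satisfies γ ≻ λ, and none of them belongs to Γ. -/
lemma mem_char_GammaQO (l2 : ℤ) (γ : ℤ × ℤ) (h : γ ∈ GammaQO 5 (3, l2)) :
    ∃ a b c : ℕ, γ.1 = 5 * a + 3 * c ∧ γ.2 = 5 * b + l2 * c := by
  induction h using AddSubmonoid.closure_induction with
  | mem x hx =>
    rcases hx with h | h | h <;> subst h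
    · exact ⟨1, 0, 0, by norm_num, by norm_num⟩
    · exact ⟨0, 1, 0, by norm_num, by norm_num⟩
    · exact ⟨0, 0, 1, by norm_num, by norm_num⟩
  | zero => exact ⟨0, 0, 0, by norm_num, by norm_num⟩
  | add x y _ _ ihx ihy =>
    obtain ⟨a, b, c, h1, h2⟩ := ihx
    obtain ⟨a', b', c', h1', h2'⟩ := ihy
    exact ⟨a + a', b + b', c + c',
      by push_cast [Prod.fst_add]; linarith, by push_cast [Prod.snd_add]; linarith⟩

/-- From the proof of Proposition 4.6: n = 5, λ = (3,λ₂), λ₂ ∈ {2,3}. -/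
theorem stmt17 (l2 : ℤ) (hl2 : l2 = 2 ∨ l2 = 3) (lam : ℤ × ℤ)
    (hlam : lam = (3, l2)) :
    GTriple 5 lam
      ((4 : ℤ) • lam + (5 : ℤ) • ((-1, 0) : ℤ × ℤ))
      ((4 : ℤ) • lam + (5 : ℤ) • ((0, -1) : ℤ × ℤ))
      ((3 : ℤ) • lam + (5 : ℤ) • ((-1, 1) : ℤ × ℤ)) := by
  subst hlam
  refine ⟨?_, ?_, ?_, ?_, ?_, ?_⟩
  · rcases hl2 with h | h <;> subst h <;>
      simp_all [Prod.le_def, Prod.ext_iff, Prod.smul_mk] <;> omega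
  · rcases hl2 with h | h <;> subst h <;>
      simp_all [Prod.le_def, Prod.ext_iff, Prod.smul_mk] <;> omega
  · rcases hl2 with h | h <;> subst h <;>
      simp_all [Prod.le_def, Prod.ext_iff, Prod.smul_mk] <;> omega
  all_goals {
    intro h
    obtain ⟨a, b, c, h1, h2⟩ := mem_char_GammaQO l2 _ h
    simp [Prod.smul_mk] at h1 h2
    rcases hl2 with h' | h' <;> subst h' <;> omega }
end

section
/- Let n ≥ 6 and λ = (λ₁, λ₂) ∈ ℕ² with 1 ≤ λ₂ < n, λ₁ < n, (n−2)λ₁ ≥ 3n, and λ of order n modulo nℤ². Then the three elements (n−1)λ + n(−3,1), (n−1)λ + n(−2,0), (n−2)λ + n(−2,1) lie in ℕ², are pairwise incomparable for the product order, each satisfies γ ≻ λ, and none of them belongs to Γ. -/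
lemma gamma_rep_s19 {n : ℕ} {lam g : ℤ × ℤ} (h : g ∈ GammaQO n lam) :
    ∃ k₁ k₂ k₃ : ℕ,
      g = ((k₁ : ℤ) * n + (k₃ : ℤ) * lam.1, (k₂ : ℤ) * n + (k₃ : ℤ) * lam.2) := by
  induction h using AddSubmonoid.closure_induction with
  | mem x hx =>
    rcases hx with h | h | h
    · exact ⟨1, 0, 0, by simp [h]⟩
    · exact ⟨0, 1, 0, by simp [h]⟩
    · rw [Set.mem_singleton_iff] at h; exact ⟨0, 0, 1, by simp [h]⟩
  | zero => exact ⟨0, 0, 0, by simp [Prod.zero_eq_mk]⟩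
  | add x y hx hy ihx ihy =>
    obtain ⟨a₁, a₂, a₃, rfl⟩ := ihx
    obtain ⟨b₁, b₂, b₃, rfl⟩ := ihy
    exact ⟨a₁ + b₁, a₂ + b₂, a₃ + b₃, by
      simp only [Prod.ext_iff, Prod.fst_add, Prod.snd_add]; push_cast; constructor <;> ring⟩

lemma ord_dvd {n : ℕ} {lam : ℤ × ℤ} (hn : 0 < n) (hord : orderModN n lam) (k : ℤ)
    (c₁ c₂ : ℤ) (h : k * lam.1 = (n : ℤ) * c₁ ∧ k * lam.2 = (n : ℤ) * c₂) :
    (n : ℤ) ∣ k := by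
  obtain ⟨⟨-, d₁, d₂, hd⟩, hleast⟩ := hord
  rw [Prod.ext_iff] at hd
  simp only [smul_eq_mul, Prod.smul_fst, Prod.smul_snd] at hd
  by_contra hdvd
  set r := k % (n : ℤ) with hr
  have hr0 : 0 ≤ r := Int.emod_nonneg k (by positivity)
  have hrn : r < (n : ℤ) := Int.emod_lt_of_pos k (by exact_mod_cast hn)
  have hrpos : 0 < r := by
    rcases hr0.lt_or_eq with h' | h'
    · exact h'
    · exact absurd (Int.dvd_of_emod_eq_zero h'.symm) hdvd
  have hmem : r.toNat ∈ {k : ℕ | 0 < k ∧ ∃ c₁ c₂ : ℤ,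
      (k : ℤ) • lam = ((n : ℤ) * c₁, (n : ℤ) * c₂)} := by
    refine ⟨by omega, c₁ - (k / (n:ℤ)) * d₁, c₂ - (k / (n:ℤ)) * d₂, ?_⟩
    have hk : (r.toNat : ℤ) = k - (n : ℤ) * (k / (n:ℤ)) := by
      rw [Int.toNat_of_nonneg hr0, hr, Int.emod_def]
    rw [Prod.ext_iff]
    simp only [smul_eq_mul, Prod.smul_fst, Prod.smul_snd, hk]
    constructor
    · linear_combination h.1 - (k / (n:ℤ)) * hd.1
    · linear_combination h.2 - (k / (n:ℤ)) * hd.2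
  have := hleast hmem
  omega

lemma not_mem_gamma_s19 {n : ℕ} (hn : 6 ≤ n) {lam : ℤ × ℤ} (hord : orderModN n lam)
    (ha : 0 < lam.1) (s u v : ℤ) (hs1 : 1 ≤ s) (hs2 : s < (n : ℤ)) (hu : u < 0) :
    (((n : ℤ) - s) • lam + (n : ℤ) • ((u, v) : ℤ × ℤ)) ∉ GammaQO n lam := by
  intro hmem
  obtain ⟨k₁, k₂, k₃, hrep⟩ := gamma_rep_s19 hmem
  set N := (n : ℤ) with hNdef
  have hN : (6 : ℤ) ≤ N := by rw [hNdef]; exact_mod_cast hn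
  have e1 : (N - s) * lam.1 + N * u = (k₁ : ℤ) * N + (k₃ : ℤ) * lam.1 := by
    have := congrArg Prod.fst hrep
    simpa [Prod.fst_add, smul_eq_mul] using this
  have e2 : (N - s) * lam.2 + N * v = (k₂ : ℤ) * N + (k₃ : ℤ) * lam.2 := by
    have := congrArg Prod.snd hrep
    simpa [Prod.snd_add, smul_eq_mul] using this
  have hdvd : N ∣ ((k₃ : ℤ) - (N - s)) := by
    refine ord_dvd (by omega) ⟨⟨by omega, hord.1.2⟩, hord.2⟩ _ (u - (k₁ : ℤ)) (v - (k₂ : ℤ)) ⟨?_, ?_⟩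
    · linear_combination -e1
    · linear_combination -e2
  obtain ⟨t, ht⟩ := hdvd
  have ht0 : 0 ≤ t := by
    by_contra h'
    push_neg at h'
    have h1 : t ≤ -1 := by omega
    have h2 : N * t ≤ N * (-1) := mul_le_mul_of_nonneg_left h1 (by linarith)
    have h3 : (0 : ℤ) ≤ (k₃ : ℤ) := Int.natCast_nonneg k₃
    linarith [ht, h2, h3]
  have key : N * ((k₁ : ℤ) - u + t * lam.1) = 0 := by
    linear_combination (-1) * e1 - lam.1 * ht
  have hfac : (k₁ : ℤ) - u + t * lam.1 = 0 :=
    (mul_eq_zero.mp key).resolve_left (by linarith)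
  have h3 : (0 : ℤ) ≤ (k₁ : ℤ) := Int.natCast_nonneg k₁
  nlinarith [mul_nonneg ht0 ha.le]

/-- From the proof of Proposition 4.5, case n ≥ 6: three possible generalized
Zariski exponents occur. -/
theorem stmt19 (n : ℕ) (hn : 6 ≤ n) (lam : ℤ × ℤ)
    (h1 : 1 ≤ lam.2) (h2 : lam.2 < (n : ℤ)) (h3 : lam.1 < (n : ℤ))
    (h4 : 3 * (n : ℤ) ≤ ((n : ℤ) - 2) * lam.1) (hord : orderModN n lam) :
    GTriple n lam
      (((n : ℤ) - 1) • lam + (n : ℤ) • ((-3, 1) : ℤ × ℤ))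
      (((n : ℤ) - 1) • lam + (n : ℤ) • ((-2, 0) : ℤ × ℤ))
      (((n : ℤ) - 2) • lam + (n : ℤ) • ((-2, 1) : ℤ × ℤ)) := by
  have hN : (6 : ℤ) ≤ (n : ℤ) := by exact_mod_cast hn
  have ha : 0 < lam.1 := by nlinarith
  have hnx := not_mem_gamma_s19 hn hord ha 1 (-3) 1 (by norm_num) (by linarith) (by norm_num)
  have hny := not_mem_gamma_s19 hn hord ha 1 (-2) 0 (by norm_num) (by linarith) (by norm_num)
  have hnz := not_mem_gamma_s19 hn hord ha 2 (-2) 1 (by norm_num) (by linarith) (by norm_num)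
  obtain ⟨a, b⟩ := lam
  simp only at h1 h2 h3 h4 ha
  refine ⟨⟨?_, ?_, ?_⟩, ⟨?_, ?_, ?_, ?_, ?_, ?_⟩, ⟨⟨?_, ?_⟩, ⟨?_, ?_⟩, ⟨?_, ?_⟩⟩,
    hnx, hny, hnz⟩ <;>
    simp only [Prod.smul_mk, Prod.mk_add_mk, smul_eq_mul, Prod.le_def, Prod.mk_le_mk,
      Prod.mk.injEq, ne_eq, Prod.ext_iff, not_and, Prod.fst_zero, Prod.snd_zero] <;>
    first
      | (constructor <;> nlinarith)
      | (intro h h'; nlinarith)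
end
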